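/- arXiv:2402.06732 — 8 statements merged into one kernel-verified Lean document; each statement's English description precedes it below -/
import Mathlib

section
/- Let a, b, k be nonnegative integers with k ≤ min(a,b). Then the poset D_k(a,b) of Ferrers diagrams of Durfee length exactly k contained in [a] × [b], ordered by set inclusion, is isomorphic to the product poset C(a,k) × C(b,k). -/
/-- The poset `C(n,k)`: `k`-element subsets of `{1,…,n}` written as increasing
sequences, ordered componentwise. -/
abbrev GaleC (n k : ℕ) : Type :=
  {x : Fin k → ℕ // StrictMono x ∧ ∀ i, 1 ≤ x i ∧ x i ≤ n}

/-- A Ferrers diagram: a finite order ideal (downward-closed subset) of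
`ℤ₊² = {(i,j) : i,j ≥ 1}` with the componentwise order. -/
def IsFerrers (D : Finset (ℕ × ℕ)) : Prop :=
  (∀ p ∈ D, 1 ≤ p.1 ∧ 1 ≤ p.2) ∧
  (∀ p ∈ D, ∀ q : ℕ × ℕ, 1 ≤ q.1 → 1 ≤ q.2 → q.1 ≤ p.1 → q.2 ≤ p.2 → q ∈ D)

/-- The Durfee length of a diagram `D`: the largest `k` with `[k] × [k] ⊆ D`. -/
noncomputable def durfee (D : Finset (ℕ × ℕ)) : ℕ :=
  sSup {k : ℕ | ∀ i j : ℕ, 1 ≤ i → i ≤ k → 1 ≤ j → j ≤ k → (i, j) ∈ D}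

/-- The poset `D_k(a,b)` of Ferrers diagrams of Durfee length exactly `k` contained in
`[a] × [b]`, ordered by inclusion. -/
abbrev DkP (a b k : ℕ) : Type :=
  {D : Finset (ℕ × ℕ) // IsFerrers D ∧ durfee D = k ∧ ∀ p ∈ D, p.1 ≤ a ∧ p.2 ≤ b}

namespace Stmt9

def DS (D : Finset (ℕ × ℕ)) : Set ℕ :=
  {k : ℕ | ∀ i j : ℕ, 1 ≤ i → i ≤ k → 1 ≤ j → j ≤ k → (i, j) ∈ D}

lemma durfee_def (D : Finset (ℕ × ℕ)) : durfee D = sSup (DS D) := rfl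

lemma zero_mem_DS (D : Finset (ℕ × ℕ)) : 0 ∈ DS D := by
  intro i j h1 h2 h3 h4; omega

def rowLen (D : Finset (ℕ × ℕ)) (i : ℕ) : ℕ :=
  (D.filter fun p => p.1 = i).sup Prod.snd

def colLen (D : Finset (ℕ × ℕ)) (j : ℕ) : ℕ :=
  (D.filter fun p => p.2 = j).sup Prod.fst

lemma mem_iff_row {D : Finset (ℕ × ℕ)} (hF : IsFerrers D) {i j : ℕ} (hi : 1 ≤ i) :
    (i, j) ∈ D ↔ 1 ≤ j ∧ j ≤ rowLen D i := by
  constructor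
  · intro h
    refine ⟨(hF.1 _ h).2, ?_⟩
    unfold rowLen
    exact Finset.le_sup (f := Prod.snd) (b := (i, j)) (Finset.mem_filter.2 ⟨h, rfl⟩)
  · rintro ⟨h1, h2⟩
    have hpos : 0 < rowLen D i := lt_of_lt_of_le h1 h2
    have hne : (D.filter fun p => p.1 = i).Nonempty := by
      by_contra hcon
      rw [Finset.not_nonempty_iff_eq_empty] at hcon
      simp only [rowLen, hcon, Finset.sup_empty] at hpos
      exact absurd hpos (lt_irrefl _)
    obtain ⟨p, hp, hpe⟩ := Finset.exists_mem_eq_sup _ hne Prod.snd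
    rw [Finset.mem_filter] at hp
    refine hF.2 p hp.1 (i, j) hi h1 (le_of_eq hp.2.symm) ?_
    rw [← hpe]; exact h2

lemma mem_iff_col {D : Finset (ℕ × ℕ)} (hF : IsFerrers D) {i j : ℕ} (hj : 1 ≤ j) :
    (i, j) ∈ D ↔ 1 ≤ i ∧ i ≤ colLen D j := by
  constructor
  · intro h
    refine ⟨(hF.1 _ h).1, ?_⟩
    unfold colLen
    exact Finset.le_sup (f := Prod.fst) (b := (i, j)) (Finset.mem_filter.2 ⟨h, rfl⟩)
  · rintro ⟨h1, h2⟩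
    have hpos : 0 < colLen D j := lt_of_lt_of_le h1 h2
    have hne : (D.filter fun p => p.2 = j).Nonempty := by
      by_contra hcon
      rw [Finset.not_nonempty_iff_eq_empty] at hcon
      simp only [colLen, hcon, Finset.sup_empty] at hpos
      exact absurd hpos (lt_irrefl _)
    obtain ⟨p, hp, hpe⟩ := Finset.exists_mem_eq_sup _ hne Prod.fst
    rw [Finset.mem_filter] at hp
    refine hF.2 p hp.1 (i, j) h1 hj ?_ (le_of_eq hp.2.symm)
    rw [← hpe]; exact h2

lemma rowLen_anti {D : Finset (ℕ × ℕ)} (hF : IsFerrers D) {r r' : ℕ}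
    (h1 : 1 ≤ r) (h2 : r ≤ r') : rowLen D r' ≤ rowLen D r := by
  rcases Nat.eq_zero_or_pos (rowLen D r') with h | h
  · omega
  · have hm : (r', rowLen D r') ∈ D := (mem_iff_row hF (by omega)).2 ⟨h, le_rfl⟩
    have hm2 : (r, rowLen D r') ∈ D := hF.2 _ hm (r, rowLen D r') h1 h h2 le_rfl
    exact ((mem_iff_row hF h1).1 hm2).2

lemma colLen_anti {D : Finset (ℕ × ℕ)} (hF : IsFerrers D) {r r' : ℕ}
    (h1 : 1 ≤ r) (h2 : r ≤ r') : colLen D r' ≤ colLen D r := by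
  rcases Nat.eq_zero_or_pos (colLen D r') with h | h
  · omega
  · have hm : (colLen D r', r') ∈ D := (mem_iff_col hF (by omega)).2 ⟨h, le_rfl⟩
    have hm2 : (colLen D r', r) ∈ D := hF.2 _ hm _ h h1 le_rfl h2
    exact ((mem_iff_col hF h1).1 hm2).2

lemma rowLen_mono {D D' : Finset (ℕ × ℕ)} (h : D ⊆ D') (r : ℕ) :
    rowLen D r ≤ rowLen D' r :=
  Finset.sup_mono (Finset.filter_subset_filter _ h)

lemma colLen_mono {D D' : Finset (ℕ × ℕ)} (h : D ⊆ D') (r : ℕ) :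
    colLen D r ≤ colLen D' r :=
  Finset.sup_mono (Finset.filter_subset_filter _ h)

lemma durfee_eq_of {D : Finset (ℕ × ℕ)} {k : ℕ}
    (h1 : ∀ i j, 1 ≤ i → i ≤ k → 1 ≤ j → j ≤ k → (i, j) ∈ D)
    (h2 : (k + 1, k + 1) ∉ D) : durfee D = k := by
  have hsub : ∀ n ∈ DS D, n ≤ k := by
    intro n hn
    by_contra hc
    exact h2 (hn (k + 1) (k + 1) (by omega) (by omega) (by omega) (by omega))
  rw [durfee_def]
  exact le_antisymm (csSup_le ⟨0, zero_mem_DS D⟩ hsub) (le_csSup ⟨k, hsub⟩ h1)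

lemma bddAbove_DS {D : Finset (ℕ × ℕ)} {a b : ℕ}
    (hbox : ∀ p ∈ D, p.1 ≤ a ∧ p.2 ≤ b) : BddAbove (DS D) := by
  refine ⟨a, fun n hn => ?_⟩
  rcases Nat.eq_zero_or_pos n with h | h
  · omega
  · exact (hbox _ (hn n n h le_rfl h le_rfl)).1

lemma durfee_mem {D : Finset (ℕ × ℕ)} {a b k : ℕ}
    (hbox : ∀ p ∈ D, p.1 ≤ a ∧ p.2 ≤ b) (hd : durfee D = k) :
    ∀ i j, 1 ≤ i → i ≤ k → 1 ≤ j → j ≤ k → (i, j) ∈ D := by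
  have := Nat.sSup_mem ⟨0, zero_mem_DS D⟩ (bddAbove_DS hbox)
  rw [← durfee_def, hd] at this
  exact this

lemma durfee_succ_not_mem {D : Finset (ℕ × ℕ)} {a b k : ℕ} (hF : IsFerrers D)
    (hbox : ∀ p ∈ D, p.1 ≤ a ∧ p.2 ≤ b) (hd : durfee D = k) :
    (k + 1, k + 1) ∉ D := by
  intro hmem
  have h1 : (k + 1) ∈ DS D := fun i j hi hik hj hjk =>
    hF.2 _ hmem (i, j) hi hj hik hjk
  have h2 : k + 1 ≤ durfee D := by
    rw [durfee_def]; exact le_csSup (bddAbove_DS hbox) h1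
  omega


lemma mem_char {D : Finset (ℕ × ℕ)} {a b k : ℕ} (hF : IsFerrers D)
    (hd : durfee D = k) (hbox : ∀ p ∈ D, p.1 ≤ a ∧ p.2 ≤ b) {i j : ℕ} :
    (i, j) ∈ D ↔ 1 ≤ i ∧ 1 ≤ j ∧
      ((i ≤ k ∧ j ≤ rowLen D i) ∨ (j ≤ k ∧ i ≤ colLen D j)) := by
  constructor
  · intro h
    have h1 := hF.1 _ h
    refine ⟨h1.1, h1.2, ?_⟩
    by_cases hik : i ≤ k
    · exact Or.inl ⟨hik, ((mem_iff_row hF h1.1).1 h).2⟩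
    · have hjk : j ≤ k := by
        by_contra hc
        exact durfee_succ_not_mem hF hbox hd
          (hF.2 _ h (k + 1, k + 1) (by omega) (by omega) (by omega) (by omega))
      exact Or.inr ⟨hjk, ((mem_iff_col hF h1.2).1 h).2⟩
  · rintro ⟨h1, h2, h3 | h3⟩
    · exact (mem_iff_row hF h1).2 ⟨h2, h3.2⟩
    · exact (mem_iff_col hF h2).2 ⟨h1, h3.2⟩

/-- rows/columns with high index of a `DkP` diagram are short -/
lemma rowLen_ge {D : Finset (ℕ × ℕ)} {a b k : ℕ}
    (hF : IsFerrers D) (hd : durfee D = k) (hbox : ∀ p ∈ D, p.1 ≤ a ∧ p.2 ≤ b)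
    {r : ℕ} (h1 : 1 ≤ r) (h2 : r ≤ k) : k ≤ rowLen D r :=
  ((mem_iff_row hF h1).1 (durfee_mem hbox hd r k h1 h2 (by omega) le_rfl)).2

lemma colLen_ge {D : Finset (ℕ × ℕ)} {a b k : ℕ}
    (hF : IsFerrers D) (hd : durfee D = k) (hbox : ∀ p ∈ D, p.1 ≤ a ∧ p.2 ≤ b)
    {r : ℕ} (h1 : 1 ≤ r) (h2 : r ≤ k) : k ≤ colLen D r :=
  ((mem_iff_col hF h1).1 (durfee_mem hbox hd k r (by omega) le_rfl h1 h2)).2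

lemma rowLen_le_b {D : Finset (ℕ × ℕ)} {a b k : ℕ}
    (hF : IsFerrers D) (hd : durfee D = k) (hbox : ∀ p ∈ D, p.1 ≤ a ∧ p.2 ≤ b)
    {r : ℕ} (h1 : 1 ≤ r) (h2 : r ≤ k) : rowLen D r ≤ b := by
  have hk : k ≤ rowLen D r := rowLen_ge hF hd hbox h1 h2
  have : (r, rowLen D r) ∈ D := (mem_iff_row hF h1).2 ⟨by omega, le_rfl⟩
  exact (hbox _ this).2

lemma colLen_le_a {D : Finset (ℕ × ℕ)} {a b k : ℕ}
    (hF : IsFerrers D) (hd : durfee D = k) (hbox : ∀ p ∈ D, p.1 ≤ a ∧ p.2 ≤ b)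
    {r : ℕ} (h1 : 1 ≤ r) (h2 : r ≤ k) : colLen D r ≤ a := by
  have hk : k ≤ colLen D r := colLen_ge hF hd hbox h1 h2
  have : (colLen D r, r) ∈ D := (mem_iff_col hF h1).2 ⟨by omega, le_rfl⟩
  exact (hbox _ this).1

/-! ### forward sequences -/

def toSeq (L : ℕ → ℕ) (k : ℕ) : Fin k → ℕ :=
  fun i => L (k - i.val) - (k - 1 - i.val)

lemma toSeq_strictMono {L : ℕ → ℕ} {k : ℕ}
    (hL1 : ∀ r, 1 ≤ r → r ≤ k → k ≤ L r)
    (hanti : ∀ r r', 1 ≤ r → r ≤ r' → L r' ≤ L r) :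
    StrictMono (toSeq L k) := by
  intro i j hij
  have hi : i.val < k := i.isLt
  have hj : j.val < k := j.isLt
  have hij' : i.val < j.val := hij
  have h1 : L (k - i.val) ≤ L (k - j.val) := hanti _ _ (by omega) (by omega)
  have h2 : k ≤ L (k - i.val) := hL1 _ (by omega) (by omega)
  simp only [toSeq]
  omega

lemma toSeq_bounds {L : ℕ → ℕ} {k c : ℕ}
    (hL1 : ∀ r, 1 ≤ r → r ≤ k → k ≤ L r)
    (hL2 : ∀ r, 1 ≤ r → r ≤ k → L r ≤ c) :
    ∀ i, 1 ≤ toSeq L k i ∧ toSeq L k i ≤ c := by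
  intro i
  have hi : i.val < k := i.isLt
  have h2 : k ≤ L (k - i.val) := hL1 _ (by omega) (by omega)
  have h3 : L (k - i.val) ≤ c := hL2 _ (by omega) (by omega)
  simp only [toSeq]
  omega

/-! ### the inverse construction -/

lemma gap {k : ℕ} {y : Fin k → ℕ} (hy : StrictMono y) :
    ∀ i j : Fin k, i.val ≤ j.val → y i + (j.val - i.val) ≤ y j := by
  intro i j h
  obtain ⟨d, hd⟩ : ∃ d, j.val = i.val + d := ⟨j.val - i.val, by omega⟩
  induction d generalizing j with
  | zero =>
      have : i = j := Fin.ext (by omega)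
      subst this
      simp
  | succ d ih =>
      have hlt : i.val + d < k := by omega
      have h1 := ih ⟨i.val + d, hlt⟩ (by simp) rfl
      have h2 : y ⟨i.val + d, hlt⟩ < y j := hy (by simp [Fin.lt_def]; omega)
      simp at h1
      omega

def lam {k : ℕ} (y : Fin k → ℕ) (r : ℕ) : ℕ :=
  if h : 1 ≤ r ∧ r ≤ k then y ⟨k - r, by omega⟩ + (r - 1) else 0

lemma lam_eq {k : ℕ} (y : Fin k → ℕ) {r : ℕ} (h : 1 ≤ r ∧ r ≤ k) :
    lam y r = y ⟨k - r, by omega⟩ + (r - 1) := dif_pos h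

lemma lam_ge {k : ℕ} {y : Fin k → ℕ} (hy : StrictMono y)
    (hyb : ∀ i, 1 ≤ y i) {r : ℕ} (h : 1 ≤ r ∧ r ≤ k) : k ≤ lam y r := by
  rw [lam_eq y h]
  have h0 : (0 : ℕ) < k := by omega
  have hg := gap hy ⟨0, h0⟩ ⟨k - r, by omega⟩ (by simp)
  have h1 := hyb ⟨0, h0⟩
  simp at hg
  omega

lemma lam_le {k c : ℕ} {y : Fin k → ℕ} (hy : StrictMono y)
    (hyb : ∀ i, y i ≤ c) (r : ℕ) : lam y r ≤ c := by
  by_cases h : 1 ≤ r ∧ r ≤ k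
  · rw [lam_eq y h]
    have hg := gap hy ⟨k - r, by omega⟩ ⟨k - 1, by omega⟩ (by simp; omega)
    have h1 := hyb ⟨k - 1, by omega⟩
    simp at hg
    omega
  · rw [lam, dif_neg h]
    omega

lemma lam_anti {k : ℕ} {y : Fin k → ℕ} (hy : StrictMono y)
    {r r' : ℕ} (h1 : 1 ≤ r) (h2 : r ≤ r') : lam y r' ≤ lam y r := by
  by_cases h : r' ≤ k
  · rw [lam_eq y ⟨by omega, h⟩, lam_eq y ⟨h1, by omega⟩]
    have hg := gap hy ⟨k - r', by omega⟩ ⟨k - r, by omega⟩ (by simp; omega)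
    simp at hg
    omega
  · rw [lam, dif_neg (by omega)]
    omega

lemma lam_mono {k : ℕ} {y y' : Fin k → ℕ} (h : ∀ i, y i ≤ y' i) (r : ℕ) :
    lam y r ≤ lam y' r := by
  unfold lam
  split
  · exact Nat.add_le_add_right (h _) _
  · omega


def mkD (a b k : ℕ) (x y : Fin k → ℕ) : Finset (ℕ × ℕ) :=
  (Finset.Icc 1 a ×ˢ Finset.Icc 1 b).filter fun p =>
    (p.1 ≤ k ∧ p.2 ≤ lam y p.1) ∨ (p.2 ≤ k ∧ p.1 ≤ lam x p.2)

section mkD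

variable {a b k : ℕ} {x y : Fin k → ℕ}
variable (hka : k ≤ a) (hkb : k ≤ b)
variable (hx : StrictMono x) (hxb : ∀ i, 1 ≤ x i ∧ x i ≤ a)
variable (hy : StrictMono y) (hyb : ∀ i, 1 ≤ y i ∧ y i ≤ b)

include hka hkb hx hxb hy hyb

lemma mem_mkD {i j : ℕ} :
    (i, j) ∈ mkD a b k x y ↔ 1 ≤ i ∧ 1 ≤ j ∧
      ((i ≤ k ∧ j ≤ lam y i) ∨ (j ≤ k ∧ i ≤ lam x j)) := by
  simp only [mkD, Finset.mem_filter, Finset.mem_product, Finset.mem_Icc]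
  constructor
  · rintro ⟨⟨⟨hi1, _⟩, ⟨hj1, _⟩⟩, h⟩
    exact ⟨hi1, hj1, h⟩
  · rintro ⟨hi1, hj1, h⟩
    refine ⟨⟨⟨hi1, ?_⟩, ⟨hj1, ?_⟩⟩, h⟩
    · rcases h with ⟨h1, _⟩ | ⟨_, h2⟩
      · omega
      · exact h2.trans (lam_le hx (fun i => (hxb i).2) j)
    · rcases h with ⟨_, h2⟩ | ⟨h1, _⟩
      · exact h2.trans (lam_le hy (fun i => (hyb i).2) i)
      · omega

lemma isFerrers_mkD : IsFerrers (mkD a b k x y) := by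
  constructor
  · rintro ⟨i, j⟩ hp
    have := (mem_mkD hka hkb hx hxb hy hyb).1 hp
    exact ⟨this.1, this.2.1⟩
  · rintro ⟨i, j⟩ hp ⟨i', j'⟩ h1 h2 h3 h4
    rw [mem_mkD hka hkb hx hxb hy hyb] at hp ⊢
    obtain ⟨hi1, hj1, hd⟩ := hp
    refine ⟨h1, h2, ?_⟩
    rcases hd with ⟨ha1, ha2⟩ | ⟨ha1, ha2⟩
    · exact Or.inl ⟨by omega, le_trans h4 (ha2.trans (lam_anti hy h1 h3))⟩
    · exact Or.inr ⟨by omega, le_trans h3 (ha2.trans (lam_anti hx h2 h4))⟩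

omit hka hkb hx hxb hy hyb in
lemma box_mkD : ∀ p ∈ mkD a b k x y, p.1 ≤ a ∧ p.2 ≤ b := by
  rintro ⟨i, j⟩ hp
  simp only [mkD, Finset.mem_filter, Finset.mem_product, Finset.mem_Icc] at hp
  exact ⟨hp.1.1.2, hp.1.2.2⟩

lemma durfee_mkD : durfee (mkD a b k x y) = k := by
  apply durfee_eq_of
  · intro i j hi1 hi2 hj1 hj2
    rw [mem_mkD hka hkb hx hxb hy hyb]
    exact ⟨hi1, hj1, Or.inl ⟨hi2, hj2.trans (lam_ge hy (fun i => (hyb i).1) ⟨hi1, hi2⟩)⟩⟩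
  · rw [mem_mkD hka hkb hx hxb hy hyb]
    rintro ⟨-, -, ⟨h, -⟩ | ⟨h, -⟩⟩ <;> omega

lemma rowLen_mkD {r : ℕ} (h1 : 1 ≤ r) (h2 : r ≤ k) :
    rowLen (mkD a b k x y) r = lam y r := by
  have hge : k ≤ lam y r := lam_ge hy (fun i => (hyb i).1) ⟨h1, h2⟩
  apply le_antisymm
  · unfold rowLen
    apply Finset.sup_le
    rintro ⟨i, j⟩ hp
    rw [Finset.mem_filter] at hp
    obtain ⟨hp1, hp2⟩ := hp
    simp only at hp2
    subst hp2
    rcases ((mem_mkD hka hkb hx hxb hy hyb).1 hp1).2.2 with ⟨-, h⟩ | ⟨h, -⟩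
    · exact h
    · exact h.trans hge
  · have hmem : (r, lam y r) ∈ mkD a b k x y := by
      rw [mem_mkD hka hkb hx hxb hy hyb]
      exact ⟨h1, by omega, Or.inl ⟨h2, le_rfl⟩⟩
    exact ((mem_iff_row (isFerrers_mkD hka hkb hx hxb hy hyb) h1).1 hmem).2

lemma colLen_mkD {r : ℕ} (h1 : 1 ≤ r) (h2 : r ≤ k) :
    colLen (mkD a b k x y) r = lam x r := by
  have hge : k ≤ lam x r := lam_ge hx (fun i => (hxb i).1) ⟨h1, h2⟩
  apply le_antisymm
  · unfold colLen
    apply Finset.sup_le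
    rintro ⟨i, j⟩ hp
    rw [Finset.mem_filter] at hp
    obtain ⟨hp1, hp2⟩ := hp
    simp only at hp2
    subst hp2
    rcases ((mem_mkD hka hkb hx hxb hy hyb).1 hp1).2.2 with ⟨h, -⟩ | ⟨-, h⟩
    · exact h.trans hge
    · exact h
  · have hmem : (lam x r, r) ∈ mkD a b k x y := by
      rw [mem_mkD hka hkb hx hxb hy hyb]
      exact ⟨by omega, h1, Or.inr ⟨h2, le_rfl⟩⟩
    exact ((mem_iff_col (isFerrers_mkD hka hkb hx hxb hy hyb) h1).1 hmem).2

end mkD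


lemma lam_toSeq {L : ℕ → ℕ} {k : ℕ} (hL1 : ∀ r, 1 ≤ r → r ≤ k → k ≤ L r)
    {r : ℕ} (h1 : 1 ≤ r) (h2 : r ≤ k) : lam (toSeq L k) r = L r := by
  rw [lam_eq _ ⟨h1, h2⟩]
  simp only [toSeq]
  rw [show k - (k - r) = r from by omega]
  have h4 := hL1 r h1 h2
  omega

lemma lam_sub {k : ℕ} (y : Fin k → ℕ) (i : Fin k) :
    lam y (k - i.val) = y i + (k - i.val - 1) := by
  have hi : i.val < k := i.isLt
  rw [lam_eq y ⟨by omega, by omega⟩]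
  congr 2
  exact Fin.ext (by simp only [Fin.val_mk]; omega)

end Stmt9

namespace Stmt9

section main

variable {a b k : ℕ}

noncomputable def fwd (D : DkP a b k) : GaleC a k × GaleC b k :=
  ⟨⟨toSeq (colLen D.1) k,
    toSeq_strictMono (fun _ h1 h2 => colLen_ge D.2.1 D.2.2.1 D.2.2.2 h1 h2)
      (fun _ _ h1 h2 => colLen_anti D.2.1 h1 h2),
    toSeq_bounds (fun _ h1 h2 => colLen_ge D.2.1 D.2.2.1 D.2.2.2 h1 h2)
      (fun _ h1 h2 => colLen_le_a D.2.1 D.2.2.1 D.2.2.2 h1 h2)⟩,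
   ⟨toSeq (rowLen D.1) k,
    toSeq_strictMono (fun _ h1 h2 => rowLen_ge D.2.1 D.2.2.1 D.2.2.2 h1 h2)
      (fun _ _ h1 h2 => rowLen_anti D.2.1 h1 h2),
    toSeq_bounds (fun _ h1 h2 => rowLen_ge D.2.1 D.2.2.1 D.2.2.2 h1 h2)
      (fun _ h1 h2 => rowLen_le_b D.2.1 D.2.2.1 D.2.2.2 h1 h2)⟩⟩

noncomputable def bwd (hka : k ≤ a) (hkb : k ≤ b) (p : GaleC a k × GaleC b k) :
    DkP a b k :=
  ⟨mkD a b k p.1.1 p.2.1,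
   isFerrers_mkD hka hkb p.1.2.1 p.1.2.2 p.2.2.1 p.2.2.2,
   durfee_mkD hka hkb p.1.2.1 p.1.2.2 p.2.2.1 p.2.2.2,
   box_mkD⟩

lemma left_inv (hka : k ≤ a) (hkb : k ≤ b) (D : DkP a b k) :
    bwd hka hkb (fwd D) = D := by
  obtain ⟨D, hF, hd, hbox⟩ := D
  apply Subtype.ext
  apply Finset.ext
  rintro ⟨i, j⟩
  show (i, j) ∈ mkD a b k (toSeq (colLen D) k) (toSeq (rowLen D) k) ↔ (i, j) ∈ D
  rw [mem_mkD hka hkb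
      (toSeq_strictMono (fun _ h1 h2 => colLen_ge hF hd hbox h1 h2)
        (fun _ _ h1 h2 => colLen_anti hF h1 h2))
      (toSeq_bounds (fun _ h1 h2 => colLen_ge hF hd hbox h1 h2)
        (fun _ h1 h2 => colLen_le_a hF hd hbox h1 h2))
      (toSeq_strictMono (fun _ h1 h2 => rowLen_ge hF hd hbox h1 h2)
        (fun _ _ h1 h2 => rowLen_anti hF h1 h2))
      (toSeq_bounds (fun _ h1 h2 => rowLen_ge hF hd hbox h1 h2)
        (fun _ h1 h2 => rowLen_le_b hF hd hbox h1 h2)),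
    mem_char hF hd hbox]
  have e1 : ∀ r, 1 ≤ r → r ≤ k → lam (toSeq (rowLen D) k) r = rowLen D r :=
    fun r h1 h2 => lam_toSeq (fun _ h1 h2 => rowLen_ge hF hd hbox h1 h2) h1 h2
  have e2 : ∀ r, 1 ≤ r → r ≤ k → lam (toSeq (colLen D) k) r = colLen D r :=
    fun r h1 h2 => lam_toSeq (fun _ h1 h2 => colLen_ge hF hd hbox h1 h2) h1 h2
  constructor
  · rintro ⟨h1, h2, ⟨h3, h4⟩ | ⟨h3, h4⟩⟩
    · exact ⟨h1, h2, Or.inl ⟨h3, by rwa [e1 i h1 h3] at h4⟩⟩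
    · exact ⟨h1, h2, Or.inr ⟨h3, by rwa [e2 j h2 h3] at h4⟩⟩
  · rintro ⟨h1, h2, ⟨h3, h4⟩ | ⟨h3, h4⟩⟩
    · exact ⟨h1, h2, Or.inl ⟨h3, by rwa [e1 i h1 h3]⟩⟩
    · exact ⟨h1, h2, Or.inr ⟨h3, by rwa [e2 j h2 h3]⟩⟩

lemma right_inv (hka : k ≤ a) (hkb : k ≤ b) (p : GaleC a k × GaleC b k) :
    fwd (bwd hka hkb p) = p := by
  obtain ⟨⟨x, hx, hxb⟩, ⟨y, hy, hyb⟩⟩ := p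
  have hx' : StrictMono x := hx
  apply Prod.ext
  · apply Subtype.ext
    funext i
    have hi : i.val < k := i.isLt
    show toSeq (colLen (mkD a b k x y)) k i = x i
    simp only [toSeq]
    rw [colLen_mkD hka hkb hx hxb hy hyb (by omega) (by omega), lam_sub]
    omega
  · apply Subtype.ext
    funext i
    have hi : i.val < k := i.isLt
    show toSeq (rowLen (mkD a b k x y)) k i = y i
    simp only [toSeq]
    rw [rowLen_mkD hka hkb hx hxb hy hyb (by omega) (by omega), lam_sub]
    omega

lemma fwd_mono : Monotone (fwd : DkP a b k → GaleC a k × GaleC b k) := by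
  intro D D' h
  have hsub : D.1 ⊆ D'.1 := h
  constructor
  · show toSeq (colLen D.1) k ≤ toSeq (colLen D'.1) k
    intro i
    exact Nat.sub_le_sub_right (colLen_mono hsub _) _
  · show toSeq (rowLen D.1) k ≤ toSeq (rowLen D'.1) k
    intro i
    exact Nat.sub_le_sub_right (rowLen_mono hsub _) _

lemma bwd_mono (hka : k ≤ a) (hkb : k ≤ b) : Monotone (bwd hka hkb) := by
  intro p q h
  show mkD a b k p.1.1 p.2.1 ⊆ mkD a b k q.1.1 q.2.1
  have hx : ∀ i, p.1.1 i ≤ q.1.1 i := h.1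
  have hy : ∀ i, p.2.1 i ≤ q.2.1 i := h.2
  rintro ⟨i, j⟩ hm
  rw [mem_mkD hka hkb p.1.2.1 p.1.2.2 p.2.2.1 p.2.2.2] at hm
  rw [mem_mkD hka hkb q.1.2.1 q.1.2.2 q.2.2.1 q.2.2.2]
  obtain ⟨h1, h2, ⟨h3, h4⟩ | ⟨h3, h4⟩⟩ := hm
  · exact ⟨h1, h2, Or.inl ⟨h3, h4.trans (lam_mono hy i)⟩⟩
  · exact ⟨h1, h2, Or.inr ⟨h3, h4.trans (lam_mono hx j)⟩⟩

end main

end Stmt9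

/-- For `k ≤ min(a,b)`, the poset `D_k(a,b)` is isomorphic to the product poset
`C(a,k) × C(b,k)`. -/
theorem stmt9 (a b k : ℕ) (hk : k ≤ min a b) :
    Nonempty (DkP a b k ≃o GaleC a k × GaleC b k) := by
  have hka : k ≤ a := hk.trans (min_le_left _ _)
  have hkb : k ≤ b := hk.trans (min_le_right _ _)
  exact ⟨(Equiv.mk Stmt9.fwd (Stmt9.bwd hka hkb)
      (Stmt9.left_inv hka hkb) (Stmt9.right_inv hka hkb)).toOrderIso
    Stmt9.fwd_mono (Stmt9.bwd_mono hka hkb)⟩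
end

section
/- Let P be a finite poset and k a nonnegative integer. Then the relation ≤_k, defined as the reflexive transitive closure of the relation ≺_k on the set A_k(P) of k-element antichains of P, is a partial order on A_k(P). -/
/-- `A_k(P)`: the set of antichains of `P` of cardinality exactly `k`. -/
def AkSet (P : Type*) [PartialOrder P] (k : ℕ) : Type _ :=
  {A : Finset P // IsAntichain (· ≤ ·) (A : Set P) ∧ A.card = k}

/-- The underlying finite set of elements of an antichain in `A_k(P)`. -/
def AkSet.carrier {P : Type*} [PartialOrder P] {k : ℕ} (A : AkSet P k) : Finset P :=
  Subtype.val A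

/-- `A ≺_k B` iff `A \ B = {a}` and `B \ A = {b}` are singletons with `a <_P b`. -/
def PrecK {P : Type*} [PartialOrder P] {k : ℕ} (A B : AkSet P k) : Prop :=
  ∃ a b : P,
    ((A.carrier : Set P) \ (B.carrier : Set P)) = {a} ∧
    ((B.carrier : Set P) \ (A.carrier : Set P)) = {b} ∧ a < b

/-- `≤_k`: the reflexive transitive closure of `≺_k` on `A_k(P)`. -/
def LeK {P : Type*} [PartialOrder P] {k : ℕ} : AkSet P k → AkSet P k → Prop :=
  Relation.ReflTransGen PrecK

/-- A strictly monotone ℕ-valued rank function on a finite poset, via a linear extension. -/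
noncomputable def pRank (P : Type*) [PartialOrder P] [Fintype P] (x : P) : ℕ :=
  (Finset.univ.filter (fun y : P => toLinearExtension y ≤ toLinearExtension x)).card

lemma pRank_strictMono {P : Type*} [PartialOrder P] [Fintype P] {a b : P} (h : a < b) :
    pRank P a < pRank P b := by
  have hinj : Function.Injective (toLinearExtension (α := P)) := fun a b h => h
  apply Finset.card_lt_card
  constructor
  · intro y hy
    simp only [Finset.mem_filter, Finset.mem_univ, true_and] at hy ⊢
    exact hy.trans (toLinearExtension.monotone h.le)
  · intro hsub
    have hb : b ∈ Finset.univ.filter (fun y : P => toLinearExtension y ≤ toLinearExtension b) := by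
      simp
    have := hsub hb
    simp only [Finset.mem_filter, Finset.mem_univ, true_and] at this
    have : toLinearExtension b = toLinearExtension a :=
      le_antisymm this (toLinearExtension.monotone h.le)
    exact h.ne (hinj this).symm

/-- The measure: sum of ranks over the antichain. -/
noncomputable def akMeasure {P : Type*} [PartialOrder P] [Fintype P] {k : ℕ}
    (A : AkSet P k) : ℕ :=
  ∑ x ∈ A.carrier, pRank P x

lemma precK_measure_lt {P : Type*} [PartialOrder P] [Fintype P] {k : ℕ}
    {A B : AkSet P k} (h : PrecK A B) : akMeasure A < akMeasure B := by
  classical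
  obtain ⟨a, b, hA, hB, hab⟩ := h
  have hA' : A.carrier \ B.carrier = {a} := by
    apply Finset.coe_injective; rw [Finset.coe_sdiff, hA]; simp
  have hB' : B.carrier \ A.carrier = {b} := by
    apply Finset.coe_injective; rw [Finset.coe_sdiff, hB]; simp
  have e1 : ∑ x ∈ A.carrier, pRank P x
      = ∑ x ∈ A.carrier ∩ B.carrier, pRank P x + pRank P a := by
    rw [← Finset.sum_inter_add_sum_sdiff A.carrier B.carrier, hA', Finset.sum_singleton]
  have e2 : ∑ x ∈ B.carrier, pRank P x
      = ∑ x ∈ A.carrier ∩ B.carrier, pRank P x + pRank P b := by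
    rw [← Finset.sum_inter_add_sum_sdiff B.carrier A.carrier, hB', Finset.sum_singleton,
      Finset.inter_comm]
  unfold akMeasure
  rw [e1, e2]
  exact Nat.add_lt_add_left (pRank_strictMono hab) _

lemma leK_measure_le {P : Type*} [PartialOrder P] [Fintype P] {k : ℕ}
    {A B : AkSet P k} (h : LeK A B) : akMeasure A ≤ akMeasure B := by
  induction h with
  | refl => exact le_rfl
  | tail _ hbc ih => exact ih.trans (precK_measure_lt hbc).le

/-- For a finite poset `P`, the relation `≤_k` is a partial order on `A_k(P)`. -/
theorem stmt10 (P : Type*) [PartialOrder P] [Fintype P] (k : ℕ) :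
    IsPartialOrder (AkSet P k) LeK := by
  haveI : IsPreorder (AkSet P k) LeK :=
    { refl := fun _ => Relation.ReflTransGen.refl,
      trans := fun _ _ _ => Relation.ReflTransGen.trans }
  haveI : IsAntisymm (AkSet P k) LeK := ⟨?_⟩
  · exact ⟨⟩
  intro A B hAB hBA
  rcases Relation.ReflTransGen.cases_head hAB with h | ⟨C, hAC, hCB⟩
  · exact h
  · exact absurd ((precK_measure_lt hAC).trans_le ((leK_measure_le hCB).trans
      (leK_measure_le hBA))) (lt_irrefl _)
end

section
/- Let P be a finite poset, k a nonnegative integer, and A, B ∈ A_k(P). If A ≤_k B, then A ≤_J B, where A ≤_J B means that for every a ∈ A there exists b ∈ B with a ≤_P b. In other words, the restriction of the partial order ≤_J to A_k(P) refines ≤_k. -/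
/-- If `A ≤_k B` in `A_k(P)`, then `A ≤_J B`, i.e. every `a ∈ A` admits `b ∈ B`
with `a ≤_P b`: the order `≤_J` restricted to `A_k(P)` refines `≤_k`. -/
theorem stmt11 (P : Type*) [PartialOrder P] [Fintype P] (k : ℕ)
    (A B : AkSet P k) (h : LeK A B) :
    ∀ a ∈ A.carrier, ∃ b ∈ B.carrier, a ≤ b := by
  induction h with
  | refl => exact fun a ha => ⟨a, ha, le_refl a⟩
  | tail _ hstep ih =>
    rename_i C D _
    intro a ha
    obtain ⟨b, hb, hab⟩ := ih a ha
    obtain ⟨a0, b0, hCD, hDC, hlt⟩ := hstep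
    by_cases hbD : b ∈ D.carrier
    · exact ⟨b, hbD, hab⟩
    · have : b ∈ ((C.carrier : Set P) \ (D.carrier : Set P)) := ⟨hb, hbD⟩
      rw [hCD] at this
      have hb0 : b0 ∈ D.carrier := by
        have : b0 ∈ ((D.carrier : Set P) \ (C.carrier : Set P)) := by
          rw [hDC]; rfl
        exact this.1
      exact ⟨b0, hb0, hab.trans (this ▸ hlt.le)⟩
end

section
/- Let P be a finite poset, k a nonnegative integer, and A, B ∈ A_k(P) with A ≤_k B. Then the elements of A and B can be enumerated as A = {a_1,…,a_k} and B = {b_1,…,b_k} in such a way that a_i ≤_P b_i for all 1 ≤ i ≤ k; equivalently, there is a bijection g : A → B with a ≤_P g(a) for all a ∈ A. -/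
lemma precK_equiv {P : Type*} [PartialOrder P] {k : ℕ} {B C : AkSet P k}
    (h : PrecK B C) :
    ∃ g : {x // x ∈ B.carrier} ≃ {x // x ∈ C.carrier},
      ∀ x : {x // x ∈ B.carrier}, (x : P) ≤ (g x : P) := by
  obtain ⟨a, b, hBC, hCB, hab⟩ := h
  have ha : a ∈ ((B.carrier : Set P) \ (C.carrier : Set P)) := hBC ▸ Set.mem_singleton a
  have hb : b ∈ ((C.carrier : Set P) \ (B.carrier : Set P)) := hCB ▸ Set.mem_singleton b
  have haB : a ∈ B.carrier := ha.1
  have haC : a ∉ C.carrier := ha.2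
  have hbC : b ∈ C.carrier := hb.1
  have hbB : b ∉ B.carrier := hb.2
  have hmemC : ∀ x : P, x ∈ B.carrier → x ≠ a → x ∈ C.carrier := by
    intro x hx hxa
    by_contra hxC
    have hmem : x ∈ ((B.carrier : Set P) \ (C.carrier : Set P)) := ⟨hx, hxC⟩
    rw [hBC] at hmem
    exact hxa hmem
  have hmemB : ∀ x : P, x ∈ C.carrier → x ≠ b → x ∈ B.carrier := by
    intro x hx hxb
    by_contra hxB
    have hmem : x ∈ ((C.carrier : Set P) \ (B.carrier : Set P)) := ⟨hx, hxB⟩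
    rw [hCB] at hmem
    exact hxb hmem
  classical
  refine ⟨⟨fun x => if h : (x : P) = a then ⟨b, hbC⟩ else ⟨x, hmemC x x.2 h⟩,
    fun y => if h : (y : P) = b then ⟨a, haB⟩ else ⟨y, hmemB y y.2 h⟩, ?_, ?_⟩, ?_⟩
  · rintro ⟨x, hx⟩
    by_cases hxa : x = a
    · simp [hxa, hbB, (by rintro rfl; exact hbB haB : a ≠ b).symm]
    · have hxb : x ≠ b := by rintro rfl; exact hbB hx
      simp [hxa, hxb]
  · rintro ⟨y, hy⟩
    by_cases hyb : y = b
    · simp [hyb, haC, (by rintro rfl; exact haC hbC : a ≠ b)]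
    · have hya : y ≠ a := by rintro rfl; exact haC hy
      simp [hyb, hya]
  · rintro ⟨x, hx⟩
    by_cases hxa : x = a
    · simp only [Equiv.coe_fn_mk, hxa, dif_pos]
      exact hab.le.trans_eq (by subst hxa; rfl) |>.trans_eq rfl
    · simp [hxa]

/-- If `A ≤_k B` in `A_k(P)`, then there is a bijection `g : A → B` with
`a ≤_P g(a)` for all `a ∈ A` (i.e. the elements of `A` and `B` can be enumerated
as `a₁,…,a_k` and `b₁,…,b_k` with `aᵢ ≤_P bᵢ` for all `i`). -/
theorem stmt12 (P : Type*) [PartialOrder P] [Fintype P] (k : ℕ)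
    (A B : AkSet P k) (h : LeK A B) :
    ∃ g : {x // x ∈ A.carrier} ≃ {x // x ∈ B.carrier},
      ∀ a : {x // x ∈ A.carrier}, (a : P) ≤ (g a : P) := by
  induction h with
  | refl => exact ⟨Equiv.refl _, fun a => le_refl _⟩
  | tail _ hprec ih =>
    obtain ⟨g, hg⟩ := ih
    obtain ⟨f, hf⟩ := precK_equiv hprec
    exact ⟨g.trans f, fun a => (hg a).trans (hf (g a))⟩
end

section
/- Let P be a finite poset, k a nonnegative integer, and A, B ∈ A_k(P). Then B covers A in the poset (A_k(P), ≤_k) if and only if A ≺_k B and the unique elements a ∈ A \ B and b ∈ B \ A satisfy a ⋖_P b (i.e., b covers a in P). -/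
/-- The strict order associated to `≤_k`. -/
def LtK {P : Type*} [PartialOrder P] {k : ℕ} (A B : AkSet P k) : Prop :=
  LeK A B ∧ A ≠ B

/-- `B` covers `A` in the poset `(A_k(P), ≤_k)`. -/
def CovK {P : Type*} [PartialOrder P] {k : ℕ} (A B : AkSet P k) : Prop :=
  LtK A B ∧ ∀ C : AkSet P k, LtK A C → ¬ LtK C B

section Aux

variable {P : Type*} [PartialOrder P] {k : ℕ}

lemma AkSet.ext' {A B : AkSet P k} (h : A.carrier = B.carrier) : A = B :=
  Subtype.ext h

lemma AkSet.card_carrier (A : AkSet P k) : A.carrier.card = k := A.2.2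

lemma precK_ne {A B : AkSet P k} (h : PrecK A B) : A ≠ B := by
  obtain ⟨a, b, hA, hB, hab⟩ := h
  intro he
  rw [he, Set.diff_self] at hA
  exact (Set.singleton_ne_empty a) hA.symm

/-- Along `≤_k`, every element of the smaller antichain is dominated by some
element of the bigger one. -/
lemma leK_forward {A C : AkSet P k} (h : LeK A C) :
    ∀ x ∈ (A.carrier : Set P), ∃ y ∈ (C.carrier : Set P), x ≤ y := by
  induction h with
  | refl => exact fun x hx => ⟨x, hx, le_rfl⟩
  | @tail D E _ hstep ih =>
    intro x hx
    obtain ⟨y, hy, hxy⟩ := ih x hx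
    obtain ⟨d, e, hD, hE, hde⟩ := hstep
    by_cases hyE : y ∈ (E.carrier : Set P)
    · exact ⟨y, hyE, hxy⟩
    · have : y ∈ ((D.carrier : Set P) \ (E.carrier : Set P)) := ⟨hy, hyE⟩
      rw [hD, Set.mem_singleton_iff] at this
      have he : e ∈ (E.carrier : Set P) := by
        have : e ∈ ((E.carrier : Set P) \ (D.carrier : Set P)) := by
          rw [hE]; rfl
        exact this.1
      exact ⟨e, he, hxy.trans (this ▸ hde.le)⟩

/-- Along `≤_k`, every element of the bigger antichain dominates some
element of the smaller one. -/
lemma leK_backward {A C : AkSet P k} (h : LeK A C) :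
    ∀ y ∈ (C.carrier : Set P), ∃ x ∈ (A.carrier : Set P), x ≤ y := by
  induction h with
  | refl => exact fun y hy => ⟨y, hy, le_rfl⟩
  | @tail D E _ hstep ih =>
    intro y hy
    obtain ⟨d, e, hD, hE, hde⟩ := hstep
    by_cases hyD : y ∈ (D.carrier : Set P)
    · exact ih y hyD
    · have : y ∈ ((E.carrier : Set P) \ (D.carrier : Set P)) := ⟨hy, hyD⟩
      rw [hE, Set.mem_singleton_iff] at this
      have hd : d ∈ (D.carrier : Set P) := by
        have : d ∈ ((D.carrier : Set P) \ (E.carrier : Set P)) := by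
          rw [hD]; rfl
        exact this.1
      obtain ⟨x, hx, hxd⟩ := ih d hd
      exact ⟨x, hx, hxd.trans (this ▸ hde.le)⟩

lemma ne_diff_nonempty {A C : AkSet P k} (h : A ≠ C) :
    ((A.carrier : Set P) \ (C.carrier : Set P)).Nonempty := by
  rw [Set.nonempty_iff_ne_empty]
  intro hemp
  rw [Set.diff_eq_empty] at hemp
  have hsub : A.carrier ⊆ C.carrier := fun x hx => by exact_mod_cast hemp hx
  have : A.carrier = C.carrier :=
    Finset.eq_of_subset_of_card_le hsub (by rw [A.card_carrier, C.card_carrier])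
  exact h (AkSet.ext' this)

end Aux

/-- `B` covers `A` in `(A_k(P), ≤_k)` iff `A ≺_k B` and the unique elements
`a ∈ A \ B`, `b ∈ B \ A` satisfy `a ⋖_P b` (`b` covers `a` in `P`). -/
theorem stmt13 (P : Type*) [PartialOrder P] [Fintype P] (k : ℕ) (A B : AkSet P k) :
    CovK A B ↔ ∃ a b : P,
      ((A.carrier : Set P) \ (B.carrier : Set P)) = {a} ∧
      ((B.carrier : Set P) \ (A.carrier : Set P)) = {b} ∧ a ⋖ b := by
  classical
  constructor
  · rintro ⟨⟨hle, hne⟩, hcov⟩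
    -- first, the chain from A to B has exactly one step
    have hstep : PrecK A B := by
      rcases (Relation.ReflTransGen.cases_head hle) with heq | ⟨D, hAD, hDB⟩
      · exact absurd heq hne
      · by_cases hDB' : D = B
        · exact hDB' ▸ hAD
        · exact absurd ⟨hDB, hDB'⟩
            (hcov D ⟨Relation.ReflTransGen.single hAD, precK_ne hAD⟩)
    obtain ⟨a, b, hA, hB, hab⟩ := hstep
    refine ⟨a, b, hA, hB, hab, ?_⟩
    -- now show a ⋖ b : if a < c < b, build the intermediate antichain
    intro c hac hcb
    have haA : a ∈ (A.carrier : Set P) ∧ a ∉ (B.carrier : Set P) := by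
      have : a ∈ ((A.carrier : Set P) \ (B.carrier : Set P)) := by rw [hA]; rfl
      exact this
    have hbB : b ∈ (B.carrier : Set P) ∧ b ∉ (A.carrier : Set P) := by
      have : b ∈ ((B.carrier : Set P) \ (A.carrier : Set P)) := by rw [hB]; rfl
      exact this
    have hcA : c ∉ (A.carrier : Set P) := fun hc =>
      A.2.1 haA.1 hc (fun h => absurd (h ▸ hac) (lt_irrefl _)) hac.le
    have hcB : c ∉ (B.carrier : Set P) := fun hc =>
      B.2.1 hc hbB.1 (fun h => absurd (h ▸ hcb) (lt_irrefl _)) hcb.le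
    -- the intermediate finset
    set C0 : Finset P := insert c (A.carrier ∩ B.carrier) with hC0
    have hcABc : c ∉ A.carrier ∩ B.carrier := fun h =>
      hcA (by exact_mod_cast (Finset.mem_inter.mp h).1)
    have hC0coe : (C0 : Set P) = insert c ((A.carrier : Set P) ∩ (B.carrier : Set P)) := by
      simp [hC0]
    have hmemC0 : ∀ x : P, x ∈ (C0 : Set P) ↔
        x = c ∨ (x ∈ (A.carrier : Set P) ∧ x ∈ (B.carrier : Set P)) := by
      intro x; rw [hC0coe]; simp [Set.mem_insert_iff]
    -- C0 is an antichain
    have hanti : IsAntichain (· ≤ ·) (C0 : Set P) := by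
      intro x hx y hy hxy hxley
      rw [hmemC0] at hx hy
      rcases hx with rfl | hx
      · rcases hy with rfl | hy
        · exact hxy rfl
        · -- c ≤ y, y ∈ A ∩ B : then a < c ≤ y with a, y ∈ A
          have hay : a ≠ y := fun h => haA.2 (h ▸ hy.2)
          exact A.2.1 haA.1 hy.1 hay (hac.le.trans hxley)
      · rcases hy with rfl | hy
        · -- x ≤ c, x ∈ A ∩ B : then x ≤ c < b with x, b ∈ B
          have hxb : x ≠ b := fun h => hbB.2 (h ▸ hx.1)
          exact B.2.1 hx.2 hbB.1 hxb (hxley.trans hcb.le)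
        · exact A.2.1 hx.1 hy.1 hxy hxley
    -- C0 has cardinality k
    have hAdiff : A.carrier \ B.carrier = {a} := by
      apply Finset.coe_injective
      rw [Finset.coe_sdiff, hA, Finset.coe_singleton]
    have hcardinter : (A.carrier ∩ B.carrier).card + 1 = k := by
      have h1 : (A.carrier ∩ B.carrier).card + (A.carrier \ B.carrier).card
          = A.carrier.card := Finset.card_inter_add_card_sdiff _ _
      rw [hAdiff, Finset.card_singleton, A.card_carrier] at h1
      exact h1
    have hcard : C0.card = k := by
      rw [hC0, Finset.card_insert_of_notMem hcABc, hcardinter]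
    set C : AkSet P k := ⟨C0, hanti, hcard⟩ with hC
    have hCcoe : (C.carrier : Set P) = (C0 : Set P) := rfl
    -- A ≺ C
    have hAC : PrecK A C := by
      refine ⟨a, c, ?_, ?_, hac⟩
      · ext x
        rw [Set.mem_diff, hCcoe, hmemC0, Set.mem_singleton_iff]
        constructor
        · rintro ⟨hxA, hx⟩
          push_neg at hx
          have hxB : x ∉ (B.carrier : Set P) := fun h => hx.2 hxA h
          have : x ∈ ((A.carrier : Set P) \ (B.carrier : Set P)) := ⟨hxA, hxB⟩
          rwa [hA, Set.mem_singleton_iff] at this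
        · rintro rfl
          refine ⟨haA.1, ?_⟩
          push_neg
          exact ⟨fun h => absurd (h ▸ hac) (lt_irrefl _), fun _ => haA.2⟩
      · ext x
        rw [Set.mem_diff, hCcoe, hmemC0, Set.mem_singleton_iff]
        constructor
        · rintro ⟨hx, hxA⟩
          rcases hx with rfl | hx
          · rfl
          · exact absurd hx.1 hxA
        · rintro rfl
          exact ⟨Or.inl rfl, hcA⟩
    -- C ≺ B
    have hCB : PrecK C B := by
      refine ⟨c, b, ?_, ?_, hcb⟩
      · ext x
        rw [Set.mem_diff, hCcoe, hmemC0, Set.mem_singleton_iff]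
        constructor
        · rintro ⟨hx, hxB⟩
          rcases hx with rfl | hx
          · rfl
          · exact absurd hx.2 hxB
        · rintro rfl
          exact ⟨Or.inl rfl, hcB⟩
      · ext x
        rw [Set.mem_diff, hCcoe, hmemC0, Set.mem_singleton_iff]
        constructor
        · rintro ⟨hxB, hx⟩
          push_neg at hx
          have hxA : x ∉ (A.carrier : Set P) := fun h => hx.2 h hxB
          have : x ∈ ((B.carrier : Set P) \ (A.carrier : Set P)) := ⟨hxB, hxA⟩
          rwa [hB, Set.mem_singleton_iff] at this
        · rintro rfl
          refine ⟨hbB.1, ?_⟩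
          push_neg
          exact ⟨fun h => absurd (h ▸ hcb) (lt_irrefl _), fun h => absurd h hbB.2⟩
    exact hcov C ⟨Relation.ReflTransGen.single hAC, precK_ne hAC⟩
      ⟨Relation.ReflTransGen.single hCB, precK_ne hCB⟩
  · rintro ⟨a, b, hA, hB, hab⟩
    have haA : a ∈ (A.carrier : Set P) ∧ a ∉ (B.carrier : Set P) := by
      have : a ∈ ((A.carrier : Set P) \ (B.carrier : Set P)) := by rw [hA]; rfl
      exact this
    have hbB : b ∈ (B.carrier : Set P) ∧ b ∉ (A.carrier : Set P) := by
      have : b ∈ ((B.carrier : Set P) \ (A.carrier : Set P)) := by rw [hB]; rfl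
      exact this
    have hstep : PrecK A B := ⟨a, b, hA, hB, hab.lt⟩
    refine ⟨⟨Relation.ReflTransGen.single hstep, precK_ne hstep⟩, ?_⟩
    rintro C ⟨hAC, hACne⟩ ⟨hCB, hCBne⟩
    -- derive C = B, a contradiction
    apply hCBne
    apply AkSet.ext'
    -- first: C \ A ⊆ {b}
    have key1 : ∀ x ∈ (C.carrier : Set P), x ∉ (A.carrier : Set P) → x = b := by
      intro x hxC hxA
      obtain ⟨a', ha'A, ha'x⟩ := leK_backward hAC x hxC
      obtain ⟨b', hb'B, hxb'⟩ := leK_forward hCB x hxC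
      have ha'x' : a' < x := lt_of_le_of_ne ha'x (fun h => hxA (h ▸ ha'A))
      have ha'b' : a' < b' := ha'x'.trans_le hxb'
      have ha' : a' = a := by
        by_contra hne
        have ha'B : a' ∉ (B.carrier : Set P) := fun h =>
          B.2.1 h hb'B (fun he => absurd (he ▸ ha'b') (lt_irrefl _)) ha'b'.le
        have : a' ∈ ((A.carrier : Set P) \ (B.carrier : Set P)) := ⟨ha'A, ha'B⟩
        rw [hA, Set.mem_singleton_iff] at this
        exact hne this
      have hb' : b' = b := by
        by_contra hne
        have hb'A : b' ∉ (A.carrier : Set P) := fun h =>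
          A.2.1 ha'A h (fun he => absurd (he ▸ ha'b') (lt_irrefl _)) ha'b'.le
        have : b' ∈ ((B.carrier : Set P) \ (A.carrier : Set P)) := ⟨hb'B, hb'A⟩
        rw [hB, Set.mem_singleton_iff] at this
        exact hne this
      subst ha'; subst hb'
      -- a < x ≤ b with a ⋖ b forces x = b
      rcases lt_or_eq_of_le hxb' with hlt | heq
      · exact absurd hlt (hab.2 ha'x')
      · exact heq
    -- second: A \ C ⊆ {a}
    have key2 : ∀ x ∈ (A.carrier : Set P), x ∉ (C.carrier : Set P) → x = a := by
      intro x hxA hxC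
      obtain ⟨y, hyC, hxy⟩ := leK_forward hAC x hxA
      obtain ⟨b', hb'B, hyb'⟩ := leK_forward hCB y hyC
      have hxy' : x < y := lt_of_le_of_ne hxy (fun h => hxC (h ▸ hyC))
      have hxb' : x < b' := hxy'.trans_le hyb'
      have hb' : b' = b := by
        by_contra hne
        have hb'A : b' ∉ (A.carrier : Set P) := fun h =>
          A.2.1 hxA h (fun he => absurd (he ▸ hxb') (lt_irrefl _)) hxb'.le
        have : b' ∈ ((B.carrier : Set P) \ (A.carrier : Set P)) := ⟨hb'B, hb'A⟩
        rw [hB, Set.mem_singleton_iff] at this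
        exact hne this
      subst hb'
      have hx : x = a := by
        by_contra hne
        have hxB : x ∉ (B.carrier : Set P) := fun h =>
          B.2.1 h hb'B (fun he => absurd (he ▸ hxb') (lt_irrefl _)) hxb'.le
        have : x ∈ ((A.carrier : Set P) \ (B.carrier : Set P)) := ⟨hxA, hxB⟩
        rw [hA, Set.mem_singleton_iff] at this
        exact hne this
      exact hx
    -- C \ A and A \ C are nonempty
    obtain ⟨u, huC, huA⟩ := ne_diff_nonempty (Ne.symm hACne)
    obtain ⟨v, hvA, hvC⟩ := ne_diff_nonempty hACne
    have hub : u = b := key1 u huC huA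
    have hva : v = a := key2 v hvA hvC
    -- so b ∈ C, a ∉ C; show C.carrier = B.carrier
    have hbC : b ∈ (C.carrier : Set P) := hub ▸ huC
    have haC : a ∉ (C.carrier : Set P) := hva ▸ hvC
    have hsub : C.carrier ⊆ B.carrier := by
      intro x hxC'
      have hxC : x ∈ (C.carrier : Set P) := by exact_mod_cast hxC'
      by_cases hxA : x ∈ (A.carrier : Set P)
      · by_contra hxB
        have hxB' : x ∉ (B.carrier : Set P) := fun h => hxB (by exact_mod_cast h)
        have : x ∈ ((A.carrier : Set P) \ (B.carrier : Set P)) := ⟨hxA, hxB'⟩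
        rw [hA, Set.mem_singleton_iff] at this
        exact haC (this ▸ hxC)
      · have := key1 x hxC hxA
        subst this
        exact_mod_cast hbB.1
    exact Finset.eq_of_subset_of_card_le hsub (by rw [B.card_carrier, C.card_carrier])
end

section
/- Let a, b, k be nonnegative integers with k ≤ min(a,b). Then the poset (A_k([a] × [b]), ≤_k) of k-element antichains of [a] × [b] is isomorphic to the poset D_k(a,b) of Ferrers diagrams of Durfee length exactly k contained in [a] × [b], ordered by inclusion. -/
/-!
Both posets are identified with the pairs `(β, α)` of strictly decreasing sequences of length `k`
with entries in `[1, a]` and `[1, b]`, ordered componentwise.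

A `k`-antichain of `[a] × [b]` is determined by its sets of first and of second coordinates, each
listed in decreasing order. A move `≺_k` replaces one point by a larger one, which can only raise
these lists pointwise; conversely, below any strictly larger pair there is one differing in a single
entry by one, and it comes from a move `≺_k`, so `≤_k` is the componentwise order.

A diagram of Durfee length `k` is the union of its first `k` rows and its first `k` columns, of
lengths `α t + t` and `β t + t`, and inclusion of such diagrams is comparison of these lengths.
-/

/-- The product poset `[a] × [b]` of the chains `{1,…,a}` and `{1,…,b}`,
with the componentwise order, viewed inside `ℤ₊²`. -/
abbrev Box (a b : ℕ) : Type :=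
  {p : ℕ × ℕ // (1 ≤ p.1 ∧ p.1 ≤ a) ∧ (1 ≤ p.2 ∧ p.2 ≤ b)}

/-- `A_k(P)` is equipped with the order `≤_k`. -/
instance {P : Type*} [PartialOrder P] {k : ℕ} : LE (AkSet P k) := ⟨LeK⟩


open Finset Relation

/-! ### Increasing enumerations of finsets -/

lemma StrictAnti.apply_add_sub_le {k : ℕ} {f : Fin k → ℕ} (hf : StrictAnti f) {i j : Fin k}
    (hij : i ≤ j) : f j + (j - i : ℕ) ≤ f i := by
  obtain ⟨d, hd⟩ : ∃ d, (j : ℕ) = i + d := ⟨j - i, by omega⟩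
  induction d generalizing j with
  | zero => simp [Fin.ext (hd.trans (add_zero _))]
  | succ d ih =>
    have hlt : (i : ℕ) + d < k := by omega
    have hprev := ih (j := ⟨i + d, hlt⟩) (Fin.mk_le_mk.mpr (by omega)) rfl
    have hstep := hf (show (⟨i + d, hlt⟩ : Fin k) < j from Fin.mk_lt_mk.mpr (by omega))
    simp only at hprev
    omega

lemma Finset.orderEmbOfFin_le_iff {α : Type*} [LinearOrder α] {s : Finset α} {k : ℕ}
    (h : s.card = k) (i : Fin k) (m : α) :
    s.orderEmbOfFin h i ≤ m ↔ (i : ℕ) < #{x ∈ s | x ≤ m} := by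
  set f := s.orderEmbOfFin h
  have hcard : #{x ∈ s | x ≤ m} = #{j | f j ≤ m} := by
    conv_lhs => rw [← s.map_orderEmbOfFin_univ h]
    rw [filter_map, card_map]
    rfl
  rw [hcard]
  constructor
  · intro hi
    calc (i : ℕ) < #(Iic i) := by simp
      _ ≤ #{j | f j ≤ m} := card_le_card fun j hj => by
        simp only [mem_Iic, mem_filter, mem_univ, true_and] at hj ⊢
        exact (f.monotone hj).trans hi
  · intro hi
    by_contra hlt
    have hsub : ({j | f j ≤ m} : Finset (Fin k)) ⊆ Iio i := fun j hj => by
      simp only [mem_Iio, mem_filter, mem_univ, true_and] at hj ⊢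
      exact f.lt_iff_lt.mp (hj.trans_lt (not_le.mp hlt))
    have := card_le_card hsub
    simp only [Fin.card_Iio] at this
    omega

lemma Finset.card_filter_le_of_erase_eq {α : Type*} [LinearOrder α] {s t : Finset α} {u v : α}
    (hu : u ∈ s) (hv : v ∈ t) (huv : u ≤ v) (hst : s.erase u = t.erase v) (m : α) :
    #{x ∈ t | x ≤ m} ≤ #{x ∈ s | x ≤ m} := by
  rw [card_filter, card_filter, ← add_sum_erase _ _ hu, ← add_sum_erase _ _ hv, hst]
  gcongr
  split_ifs <;> first | omega | exact absurd (huv.trans ‹_›) ‹_›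

lemma Finset.orderEmbOfFin_le_of_erase_eq {α : Type*} [LinearOrder α] {s t : Finset α} {k : ℕ}
    (hs : s.card = k) (ht : t.card = k) {u v : α} (hu : u ∈ s) (hv : v ∈ t) (huv : u ≤ v)
    (hst : s.erase u = t.erase v) (i : Fin k) : s.orderEmbOfFin hs i ≤ t.orderEmbOfFin ht i := by
  rw [orderEmbOfFin_le_iff]
  exact ((orderEmbOfFin_le_iff ht i _).mp le_rfl).trans_le
    (card_filter_le_of_erase_eq hu hv huv hst _)

lemma Finset.erase_eq_erase_iff {α : Type*} [DecidableEq α] {s t : Finset α} {p q : α}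
    (hp : p ∈ s) (hq : q ∈ t) (hpq : p ≠ q) :
    s.erase p = t.erase q ↔ s \ t = {p} ∧ t \ s = {q} := by
  simp only [Finset.ext_iff, mem_erase, mem_sdiff, mem_singleton]
  constructor
  · intro h
    have := h p
    have := h q
    constructor <;> intro r <;> have := h r <;> grind
  · rintro ⟨hst, hts⟩ r
    have := hst r
    have := hts r
    grind

lemma Finset.image_erase_of_injOn {α β : Type*} [DecidableEq α] [DecidableEq β] {f : α → β}
    {s : Finset α} (hf : Set.InjOn f s) {x : α} (hx : x ∈ s) :
    (s.erase x).image f = (s.image f).erase (f x) := by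
  ext y
  simp only [mem_image, mem_erase]
  constructor
  · rintro ⟨z, ⟨hzx, hz⟩, rfl⟩
    exact ⟨fun h => hzx (hf hz hx h), z, hz, rfl⟩
  · rintro ⟨hy, z, hz, rfl⟩
    exact ⟨z, ⟨fun h => hy (h ▸ rfl), hz⟩, rfl⟩

/-! ### Strictly decreasing sequences -/

abbrev DecSeq (n k : ℕ) : Type := {f : Fin k → ℕ // StrictAnti f ∧ ∀ i, f i ∈ Set.Icc 1 n}

namespace DecSeq

variable {n k : ℕ}

instance : Finite (DecSeq n k) :=
  Finite.of_injective (fun f i => (⟨f.1 i, Nat.lt_succ_of_le (f.2.2 i).2⟩ : Fin (n + 1)))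
    fun _ _ h => Subtype.ext <| funext fun i => congrArg Fin.val (congrFun h i)

lemma le_apply_add (f : DecSeq n k) (t : Fin k) : k ≤ f.1 t + t := by
  have hk : 0 < k := t.pos
  have := f.2.1.apply_add_sub_le (show t ≤ ⟨k - 1, by omega⟩ from Fin.mk_le_mk.mpr (by omega))
  have := (f.2.2 ⟨k - 1, by omega⟩).1
  simp only at *
  omega

lemma apply_add_le (f : DecSeq n k) (t : Fin k) : f.1 t + t ≤ n := by
  have := f.2.1.apply_add_sub_le (show ⟨0, t.pos⟩ ≤ t from Fin.mk_le_mk.mpr (Nat.zero_le _))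
  have := (f.2.2 ⟨0, t.pos⟩).2
  simp only at *
  omega

lemma antitone_apply_add (f : DecSeq n k) : Antitone fun t => f.1 t + t := fun i j hij => by
  have := f.2.1.apply_add_sub_le hij
  have : (i : ℕ) ≤ j := hij
  simp only
  omega

def ofAntitone (r : Fin k → ℕ) (hr : Antitone r) (hk : ∀ t, k ≤ r t) (hn : ∀ t, r t ≤ n) :
    DecSeq n k :=
  ⟨fun t => r t - t, fun i j hij => by
    have := hr hij.le
    have := hk j
    have : (i : ℕ) < j := hij
    simp only
    omega,
    fun t => ⟨Nat.le_sub_of_add_le (by have := hk t; omega), (Nat.sub_le _ _).trans (hn t)⟩⟩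

lemma ofAntitone_add {r : Fin k → ℕ} {hr : Antitone r} {hk : ∀ t, k ≤ r t} {hn : ∀ t, r t ≤ n}
    (t : Fin k) : (ofAntitone r hr hk hn).1 t + t = r t :=
  Nat.sub_add_cancel ((hk t).trans' t.2.le)

def ofFinset (s : Finset ℕ) (hs : s.card = k) (hsub : s ⊆ Icc 1 n) : DecSeq n k :=
  ⟨fun i => s.orderEmbOfFin hs i.rev,
    fun _ _ hij => (s.orderEmbOfFin hs).strictMono (Fin.rev_lt_rev.mpr hij),
    fun _ => Finset.mem_Icc.mp (hsub (s.orderEmbOfFin_mem hs _))⟩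

lemma ofFinset_apply_mem (s : Finset ℕ) (hs : s.card = k) (hsub : s ⊆ Icc 1 n)
    (i : Fin k) : (ofFinset s hs hsub).1 i ∈ s :=
  s.orderEmbOfFin_mem hs _

lemma ofFinset_eq {s : Finset ℕ} {hs : s.card = k} {hsub : s ⊆ Icc 1 n}
    {f : DecSeq n k} (hf : ∀ i, f.1 i ∈ s) : ofFinset s hs hsub = f := by
  have hrev := orderEmbOfFin_unique hs (f := fun i => f.1 i.rev) (fun _ => hf _)
    fun _ _ hij => f.2.1 (Fin.rev_lt_rev.mpr hij)
  ext i
  simp [ofFinset, ← hrev]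

lemma ofFinset_le_ofFinset {s t : Finset ℕ} {hs : s.card = k} {ht : t.card = k}
    {hsub : s ⊆ Icc 1 n} {htsub : t ⊆ Icc 1 n} {u v : ℕ}
    (hu : u ∈ s) (hv : v ∈ t) (huv : u ≤ v) (hst : s.erase u = t.erase v) :
    ofFinset s hs hsub ≤ ofFinset t ht htsub :=
  fun i => orderEmbOfFin_le_of_erase_eq hs ht hu hv huv hst i.rev

/-- Raise the first entry at which `f` and `g` differ. -/
lemma exists_update_le_of_lt {f g : DecSeq n k} (h : f < g) :
    ∃ t, ∃ f' : DecSeq n k, f'.1 = Function.update f.1 t (f.1 t + 1) ∧ f' ≤ g := by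
  obtain ⟨hle, hne⟩ := Pi.lt_def.mp (show f.1 < g.1 from h)
  obtain ⟨t, hmin⟩ := exists_minimal_of_wellFoundedLT (fun t => f.1 t < g.1 t) hne
  have heq : ∀ i < t, f.1 i = g.1 i := fun i hi =>
    (hle i).eq_of_not_lt (hmin.not_prop_of_lt hi)
  have hf := f.2.1
  have hg := g.2.1
  refine ⟨t, ⟨Function.update f.1 t (f.1 t + 1), fun i j hij => ?_, fun i => ?_⟩, rfl, fun i => ?_⟩
  · have := hmin.prop
    have := hf hij
    simp only [Function.update_apply]
    split_ifs with hj hi hi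
    · exact absurd (hi.trans hj.symm ▸ hij) (lt_irrefl _)
    · subst hj; have := heq i hij; have := hg hij; omega
    · subst hi; omega
    · exact hf hij
  · have := hmin.prop
    have := (g.2.2 i).2
    have := f.2.2 i
    simp only [Function.update_apply, Set.mem_Icc]
    split_ifs with hi
    · subst hi; omega
    · exact this
  · have := hmin.prop
    simp only [Function.update_apply]
    split_ifs with hi
    · subst hi; exact this
    · exact hle i

end DecSeq

/-! ### Antichains of `[a] × [b]` -/

lemma precK_iff {P : Type*} [PartialOrder P] [DecidableEq P] {k : ℕ} {A B : AkSet P k} :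
    PrecK A B ↔
      ∃ p ∈ A.carrier, ∃ q ∈ B.carrier, A.carrier.erase p = B.carrier.erase q ∧ p < q := by
  simp only [PrecK, ← coe_sdiff, ← coe_singleton, coe_inj]
  constructor
  · rintro ⟨p, q, hp, hq, hpq⟩
    have hpA : p ∈ A.carrier := (mem_sdiff.mp (hp ▸ mem_singleton_self p)).1
    have hqB : q ∈ B.carrier := (mem_sdiff.mp (hq ▸ mem_singleton_self q)).1
    exact ⟨p, hpA, q, hqB, (erase_eq_erase_iff hpA hqB hpq.ne).mpr ⟨hp, hq⟩, hpq⟩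
  · rintro ⟨p, hp, q, hq, h, hpq⟩
    exact ⟨p, q, ((erase_eq_erase_iff hp hq hpq.ne).mp h).1,
      ((erase_eq_erase_iff hp hq hpq.ne).mp h).2, hpq⟩

namespace Box

variable {a b : ℕ}

lemma le_iff {p q : Box a b} : p ≤ q ↔ p.1.1 ≤ q.1.1 ∧ p.1.2 ≤ q.1.2 := Iff.rfl

lemma lt_iff {p q : Box a b} :
    p < q ↔ p.1.1 < q.1.1 ∧ p.1.2 ≤ q.1.2 ∨ p.1.1 ≤ q.1.1 ∧ p.1.2 < q.1.2 :=
  Subtype.coe_lt_coe.symm.trans Prod.lt_iff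

variable {A : Set (Box a b)}

lemma snd_lt_of_fst_lt (hA : IsAntichain (· ≤ ·) A) {p q : Box a b} (hp : p ∈ A) (hq : q ∈ A)
    (h : p.1.1 < q.1.1) : q.1.2 < p.1.2 := by
  by_contra hle
  obtain rfl := hA.eq hp hq (le_iff.mpr ⟨h.le, not_lt.mp hle⟩)
  exact lt_irrefl _ h

lemma injOn_fst (hA : IsAntichain (· ≤ ·) A) : Set.InjOn (fun p : Box a b => p.1.1) A := by
  intro p hp q hq h
  rcases le_total p.1.2 q.1.2 with hle | hle
  · exact hA.eq hp hq ⟨h.le, hle⟩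
  · exact (hA.eq hq hp ⟨h.ge, hle⟩).symm

lemma injOn_snd (hA : IsAntichain (· ≤ ·) A) : Set.InjOn (fun p : Box a b => p.1.2) A := by
  intro p hp q hq h
  rcases le_total p.1.1 q.1.1 with hle | hle
  · exact hA.eq hp hq ⟨hle, h.le⟩
  · exact (hA.eq hq hp ⟨hle, h.ge⟩).symm

end Box

namespace AkSet

open DecSeq

lemma isAntichain {P : Type*} [PartialOrder P] {k : ℕ} (A : AkSet P k) :
    IsAntichain (· ≤ ·) (A.carrier : Set P) :=
  A.2.1

lemma card_carrier_s15 {P : Type*} [PartialOrder P] {k : ℕ} (A : AkSet P k) : A.carrier.card = k :=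
  A.2.2

variable {a b k : ℕ}

def fstSet (A : AkSet (Box a b) k) : Finset ℕ := A.carrier.image fun p => p.1.1

def sndSet (A : AkSet (Box a b) k) : Finset ℕ := A.carrier.image fun p => p.1.2

lemma card_fstSet (A : AkSet (Box a b) k) : (fstSet A).card = k :=
  (card_image_of_injOn (Box.injOn_fst A.isAntichain)).trans A.card_carrier_s15

lemma card_sndSet (A : AkSet (Box a b) k) : (sndSet A).card = k :=
  (card_image_of_injOn (Box.injOn_snd A.isAntichain)).trans A.card_carrier_s15

lemma fstSet_subset_Icc (A : AkSet (Box a b) k) : fstSet A ⊆ Icc 1 a := fun _ hx => by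
  obtain ⟨p, -, rfl⟩ := mem_image.mp hx
  exact mem_Icc.mpr p.2.1

lemma sndSet_subset_Icc (A : AkSet (Box a b) k) : sndSet A ⊆ Icc 1 b := fun _ hy => by
  obtain ⟨p, -, rfl⟩ := mem_image.mp hy
  exact mem_Icc.mpr p.2.2

def toDecSeq (A : AkSet (Box a b) k) : DecSeq a k × DecSeq b k :=
  (ofFinset (fstSet A) (card_fstSet A) (fstSet_subset_Icc A),
    ofFinset (sndSet A) (card_sndSet A) (sndSet_subset_Icc A))

lemma fst_toDecSeq_mem (A : AkSet (Box a b) k) (i : Fin k) : (toDecSeq A).1.1 i ∈ fstSet A :=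
  ofFinset_apply_mem _ _ (fstSet_subset_Icc A) i

lemma fst_toDecSeq_eq {A : AkSet (Box a b) k} {f : DecSeq a k} (hf : ∀ i, f.1 i ∈ fstSet A) :
    (toDecSeq A).1 = f :=
  ofFinset_eq (hsub := fstSet_subset_Icc A) hf

lemma snd_toDecSeq_eq {A : AkSet (Box a b) k} {f : DecSeq b k} (hf : ∀ i, f.1 i ∈ sndSet A) :
    (toDecSeq A).2 = f :=
  ofFinset_eq (hsub := sndSet_subset_Icc A) hf

def point (m : DecSeq a k × DecSeq b k) (i : Fin k) : Box a b :=
  ⟨(m.1.1 i.rev, m.2.1 i), m.1.2.2 _, m.2.2.2 _⟩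

lemma point_injective (m : DecSeq a k × DecSeq b k) : Function.Injective (point m) :=
  fun _ _ h => m.2.2.1.injective (congrArg (fun p : Box a b => p.1.2) h)

def ofDecSeq (m : DecSeq a k × DecSeq b k) : AkSet (Box a b) k := by
  refine ⟨univ.image (point m), ?_, by rw [card_image_of_injective _ (point_injective m), card_fin]⟩
  rintro _ hp _ hq hne hle
  simp only [coe_image, coe_univ, Set.image_univ, Set.mem_range] at hp hq
  obtain ⟨i, rfl⟩ := hp
  obtain ⟨j, rfl⟩ := hq
  rcases lt_trichotomy i j with hij | rfl | hij
  · exact (Box.le_iff.mp hle).2.not_gt (m.2.2.1 hij)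
  · exact hne rfl
  · exact (Box.le_iff.mp hle).1.not_gt (m.1.2.1 (Fin.rev_lt_rev.mpr hij))

lemma toDecSeq_ofDecSeq (m : DecSeq a k × DecSeq b k) : toDecSeq (ofDecSeq m) = m := by
  refine Prod.ext (fst_toDecSeq_eq fun i => ?_) (snd_toDecSeq_eq fun i => ?_)
  · exact mem_image.mpr ⟨point m i.rev, mem_image_of_mem _ (mem_univ _), by simp [point]⟩
  · exact mem_image.mpr ⟨point m i, mem_image_of_mem _ (mem_univ _), rfl⟩

/-- Listed by increasing first coordinate, the points of `A` have decreasing second coordinates,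
so these are the entries of `(toDecSeq A).2`. -/
lemma ofDecSeq_toDecSeq (A : AkSet (Box a b) k) : ofDecSeq (toDecSeq A) = A := by
  set m := toDecSeq A
  choose e he hfst using fun i : Fin k => mem_image.mp (fst_toDecSeq_mem A i.rev)
  let snds : DecSeq b k := ⟨fun i => (e i).1.2,
    fun i j hij => Box.snd_lt_of_fst_lt A.isAntichain (he i) (he j) <| by
      simp only [hfst]
      exact m.1.2.1 (Fin.rev_lt_rev.mpr hij),
    fun i => (e i).2.2⟩
  have hsnd : m.2 = snds := snd_toDecSeq_eq fun i => mem_image_of_mem _ (he i)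
  have hpoint : ∀ i, point m i = e i := fun i =>
    Subtype.ext (Prod.ext (hfst i).symm (congrArg (·.1 i) hsnd))
  refine Subtype.ext (eq_of_subset_of_card_le ?_ ?_)
  · intro p hp
    obtain ⟨i, -, rfl⟩ := mem_image.mp hp
    exact hpoint i ▸ he i
  · exact (A.card_carrier_s15.trans (ofDecSeq m).card_carrier_s15.symm).le

lemma toDecSeq_le_of_precK {A B : AkSet (Box a b) k} (h : PrecK A B) :
    toDecSeq A ≤ toDecSeq B := by
  obtain ⟨p, hp, q, hq, hpq, hlt⟩ := precK_iff.mp h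
  have hle := Box.le_iff.mp hlt.le
  refine ⟨ofFinset_le_ofFinset (hsub := fstSet_subset_Icc A) (htsub := fstSet_subset_Icc B)
      (mem_image_of_mem _ hp) (mem_image_of_mem _ hq) hle.1 ?_,
    ofFinset_le_ofFinset (hsub := sndSet_subset_Icc A) (htsub := sndSet_subset_Icc B)
      (mem_image_of_mem _ hp) (mem_image_of_mem _ hq) hle.2 ?_⟩
  · rw [fstSet, fstSet, ← image_erase_of_injOn (Box.injOn_fst A.isAntichain) hp,
      ← image_erase_of_injOn (Box.injOn_fst B.isAntichain) hq, hpq]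
  · rw [sndSet, sndSet, ← image_erase_of_injOn (Box.injOn_snd A.isAntichain) hp,
      ← image_erase_of_injOn (Box.injOn_snd B.isAntichain) hq, hpq]

lemma toDecSeq_mono {A B : AkSet (Box a b) k} (h : A ≤ B) : toDecSeq A ≤ toDecSeq B := by
  induction h with
  | refl => exact le_rfl
  | tail _ hBC ih => exact ih.trans (toDecSeq_le_of_precK hBC)

lemma precK_ofDecSeq {m m' : DecSeq a k × DecSeq b k} (t : Fin k)
    (heq : ∀ i ≠ t, point m i = point m' i) (hlt : point m t < point m' t) :
    PrecK (ofDecSeq m) (ofDecSeq m') := by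
  refine precK_iff.mpr ⟨point m t, mem_image_of_mem _ (mem_univ t), point m' t,
    mem_image_of_mem _ (mem_univ t), ?_, hlt⟩
  show (univ.image (point m)).erase _ = (univ.image (point m')).erase _
  rw [← image_erase (point_injective m), ← image_erase (point_injective m')]
  exact image_congr fun i hi => heq i (ne_of_mem_erase hi)

lemma precK_ofDecSeq_of_covBy {m m' : DecSeq a k × DecSeq b k} (h : m ⋖ m') :
    PrecK (ofDecSeq m) (ofDecSeq m') := by
  rcases Prod.lt_iff.mp h.lt with ⟨hlt, hle⟩ | ⟨hle, hlt⟩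
  · obtain ⟨t, f, hf, hfle⟩ := exists_update_le_of_lt hlt
    have hmf : m < (f, m.2) := Prod.lt_iff.mpr <| Or.inl
      ⟨show m.1.1 < f.1 from hf ▸ lt_update_self_iff.mpr (Nat.lt_succ_self _), le_rfl⟩
    obtain rfl : (f, m.2) = m' := (show (f, m.2) ≤ m' from ⟨hfle, hle⟩).eq_of_not_lt (h.2 hmf)
    refine precK_ofDecSeq t.rev (fun i hi => ?_) ?_
    · have : i.rev ≠ t := fun h => hi (by rw [← h, Fin.rev_rev])
      exact Subtype.ext <| Prod.ext (by simp [point, hf, this]) rfl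
    · exact Box.lt_iff.mpr <| Or.inl ⟨by simp [point, hf], le_rfl⟩
  · obtain ⟨t, f, hf, hfle⟩ := exists_update_le_of_lt hlt
    have hmf : m < (m.1, f) := Prod.lt_iff.mpr <| Or.inr
      ⟨le_rfl, show m.2.1 < f.1 from hf ▸ lt_update_self_iff.mpr (Nat.lt_succ_self _)⟩
    obtain rfl : (m.1, f) = m' := (show (m.1, f) ≤ m' from ⟨hle, hfle⟩).eq_of_not_lt (h.2 hmf)
    refine precK_ofDecSeq t (fun i hi => ?_) ?_
    · exact Subtype.ext <| Prod.ext rfl (by simp [point, hf, hi])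
    · exact Box.lt_iff.mpr <| Or.inr ⟨le_rfl, by simp [point, hf]⟩

lemma ofDecSeq_mono {m m' : DecSeq a k × DecSeq b k} (h : m ≤ m') : ofDecSeq m ≤ ofDecSeq m' := by
  let _ := LocallyFiniteOrder.ofFiniteIcc (α := DecSeq a k × DecSeq b k) fun _ _ => Set.toFinite _
  exact ReflTransGen.lift ofDecSeq (fun _ _ => precK_ofDecSeq_of_covBy) m m'
    (le_iff_reflTransGen_covBy.mp h)

def orderIsoDecSeq : AkSet (Box a b) k ≃o DecSeq a k × DecSeq b k where
  toFun := toDecSeq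
  invFun := ofDecSeq
  left_inv := ofDecSeq_toDecSeq
  right_inv := toDecSeq_ofDecSeq
  map_rel_iff' {A B} := show toDecSeq A ≤ toDecSeq B ↔ A ≤ B from
    ⟨fun h => by simpa only [ofDecSeq_toDecSeq] using ofDecSeq_mono h, toDecSeq_mono⟩

end AkSet

/-! ### Ferrers diagrams -/

def rowLen (D : Finset (ℕ × ℕ)) (i : ℕ) : ℕ := {p ∈ D | p.1 = i}.sup Prod.snd

def colLen (D : Finset (ℕ × ℕ)) (j : ℕ) : ℕ := {p ∈ D | p.2 = j}.sup Prod.fst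

lemma rowLen_mono {D D' : Finset (ℕ × ℕ)} (h : D ⊆ D') (i : ℕ) : rowLen D i ≤ rowLen D' i :=
  sup_mono (filter_subset_filter _ h)

lemma colLen_mono {D D' : Finset (ℕ × ℕ)} (h : D ⊆ D') (j : ℕ) : colLen D j ≤ colLen D' j :=
  sup_mono (filter_subset_filter _ h)

lemma le_rowLen_of_mem {D : Finset (ℕ × ℕ)} {i j : ℕ} (h : (i, j) ∈ D) : j ≤ rowLen D i :=
  le_sup (f := Prod.snd) (mem_filter.mpr ⟨h, rfl⟩ : (i, j) ∈ {p ∈ D | p.1 = i})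

lemma le_colLen_of_mem {D : Finset (ℕ × ℕ)} {i j : ℕ} (h : (i, j) ∈ D) : i ≤ colLen D j :=
  le_sup (f := Prod.fst) (mem_filter.mpr ⟨h, rfl⟩ : (i, j) ∈ {p ∈ D | p.2 = j})

namespace IsFerrers

variable {D : Finset (ℕ × ℕ)}

lemma mem_iff_le_rowLen (hD : IsFerrers D) {i j : ℕ} :
    (i, j) ∈ D ↔ 1 ≤ j ∧ j ≤ rowLen D i := by
  refine ⟨fun h => ⟨(hD.1 _ h).2, le_rowLen_of_mem h⟩, ?_⟩
  rintro ⟨hj, hle⟩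
  obtain ⟨p, hp, hjp⟩ := (Finset.le_sup_iff (show ⊥ < j from hj)).mp hle
  obtain ⟨hpD, rfl⟩ := mem_filter.mp hp
  exact hD.2 p hpD _ (hD.1 p hpD).1 hj le_rfl hjp

lemma mem_iff_le_colLen (hD : IsFerrers D) {i j : ℕ} :
    (i, j) ∈ D ↔ 1 ≤ i ∧ i ≤ colLen D j := by
  refine ⟨fun h => ⟨(hD.1 _ h).1, le_colLen_of_mem h⟩, ?_⟩
  rintro ⟨hi, hle⟩
  obtain ⟨p, hp, hip⟩ := (Finset.le_sup_iff (show ⊥ < i from hi)).mp hle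
  obtain ⟨hpD, rfl⟩ := mem_filter.mp hp
  exact hD.2 p hpD _ hi (hD.1 p hpD).2 hip le_rfl

lemma rowLen_antitone (hD : IsFerrers D) {i i' : ℕ} (hi : 1 ≤ i) (h : i ≤ i') :
    rowLen D i' ≤ rowLen D i :=
  Finset.sup_le fun p hp => by
    obtain ⟨hpD, rfl⟩ := mem_filter.mp hp
    exact (hD.mem_iff_le_rowLen.mp (hD.2 p hpD (i, p.2) hi (hD.1 p hpD).2 h le_rfl)).2

lemma colLen_antitone (hD : IsFerrers D) {j j' : ℕ} (hj : 1 ≤ j) (h : j ≤ j') :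
    colLen D j' ≤ colLen D j :=
  Finset.sup_le fun p hp => by
    obtain ⟨hpD, rfl⟩ := mem_filter.mp hp
    exact (hD.mem_iff_le_colLen.mp (hD.2 p hpD (p.1, j) (hD.1 p hpD).1 hj le_rfl h)).2

lemma rowLen_eq (hD : IsFerrers D) {i r : ℕ} (h : ∀ j, (i, j) ∈ D ↔ 1 ≤ j ∧ j ≤ r) :
    rowLen D i = r := by
  have key := fun j => hD.mem_iff_le_rowLen.symm.trans (h j)
  apply le_antisymm <;> by_contra hlt
  · have := (key (rowLen D i)).mp ⟨by omega, le_rfl⟩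
    omega
  · have := (key r).mpr ⟨by omega, le_rfl⟩
    omega

lemma colLen_eq (hD : IsFerrers D) {j c : ℕ} (h : ∀ i, (i, j) ∈ D ↔ 1 ≤ i ∧ i ≤ c) :
    colLen D j = c := by
  have key := fun i => hD.mem_iff_le_colLen.symm.trans (h i)
  apply le_antisymm <;> by_contra hlt
  · have := (key (colLen D j)).mp ⟨by omega, le_rfl⟩
    omega
  · have := (key c).mpr ⟨by omega, le_rfl⟩
    omega

lemma durfee_eq_iff (hD : IsFerrers D) {k : ℕ} :
    durfee D = k ↔
      (∀ i j, 1 ≤ i → i ≤ k → 1 ≤ j → j ≤ k → (i, j) ∈ D) ∧ (k + 1, k + 1) ∉ D := by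
  set S := {m : ℕ | ∀ i j, 1 ≤ i → i ≤ m → 1 ≤ j → j ≤ m → (i, j) ∈ D}
  have hsucc : ∀ m, m + 1 ∈ S ↔ (m + 1, m + 1) ∈ D := fun m =>
    ⟨fun h => h _ _ (by omega) le_rfl (by omega) le_rfl,
      fun h i j hi him hj hjm => hD.2 _ h (i, j) hi hj him hjm⟩
  have hbdd : BddAbove S := ⟨D.sup Prod.fst, fun m hm => by
    rcases m with _ | m
    · exact Nat.zero_le _
    · exact le_sup (f := Prod.fst) ((hsucc m).mp hm)⟩
  constructor
  · rintro rfl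
    refine ⟨Nat.sSup_mem ⟨0, fun i _ _ h _ _ => by omega⟩ hbdd, fun h => ?_⟩
    have := le_csSup hbdd ((hsucc _).mpr h)
    exact Nat.not_succ_le_self _ this
  · rintro ⟨hk, hk1⟩
    refine IsGreatest.csSup_eq ⟨hk, fun m hm => ?_⟩
    by_contra hlt
    exact hk1 (hm _ _ (by omega) (by omega) (by omega) (by omega))

end IsFerrers

namespace DkP

open DecSeq

variable {a b k : ℕ}

/-- Lowered by one, `m.2` and `m.1` are the Frobenius coordinates of this diagram. -/
def diagram (m : DecSeq a k × DecSeq b k) : Finset (ℕ × ℕ) :=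
  univ.biUnion (fun t : Fin k => {(t : ℕ) + 1} ×ˢ Icc 1 (m.2.1 t + t)) ∪
    univ.biUnion (fun t : Fin k => Icc 1 (m.1.1 t + t) ×ˢ {(t : ℕ) + 1})

lemma mem_diagram {m : DecSeq a k × DecSeq b k} {i j : ℕ} :
    (i, j) ∈ diagram m ↔
      (∃ t : Fin k, (t : ℕ) + 1 = i ∧ 1 ≤ j ∧ j ≤ m.2.1 t + t) ∨
        ∃ t : Fin k, (t : ℕ) + 1 = j ∧ 1 ≤ i ∧ i ≤ m.1.1 t + t := by
  simp only [diagram, mem_union, mem_biUnion, mem_univ, true_and, mem_product, mem_singleton,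
    mem_Icc]
  grind

lemma isFerrers_diagram (m : DecSeq a k × DecSeq b k) : IsFerrers (diagram m) := by
  refine ⟨fun ⟨i, j⟩ h => ?_, fun ⟨i, j⟩ h ⟨i', j'⟩ hi' hj' hii' hjj' => ?_⟩
  · rcases mem_diagram.mp h with ⟨t, rfl, hj, -⟩ | ⟨t, rfl, hi, -⟩ <;> constructor <;> omega
  · rw [mem_diagram] at h ⊢
    rcases h with ⟨t, rfl, -, hj⟩ | ⟨t, rfl, -, hi⟩
    · have := m.2.antitone_apply_add (show (⟨i' - 1, by omega⟩ : Fin k) ≤ t from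
        Fin.mk_le_mk.mpr (by omega))
      exact Or.inl ⟨⟨i' - 1, by omega⟩, by simp only; omega, hj', by simp only at this ⊢; omega⟩
    · have := m.1.antitone_apply_add (show (⟨j' - 1, by omega⟩ : Fin k) ≤ t from
        Fin.mk_le_mk.mpr (by omega))
      exact Or.inr ⟨⟨j' - 1, by omega⟩, by simp only; omega, hi', by simp only at this ⊢; omega⟩

lemma durfee_diagram (m : DecSeq a k × DecSeq b k) : durfee (diagram m) = k := by
  refine (isFerrers_diagram m).durfee_eq_iff.mpr ⟨fun i j hi hik hj hjk => ?_, fun h => ?_⟩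
  · have := m.2.le_apply_add ⟨i - 1, by omega⟩
    exact mem_diagram.mpr (Or.inl ⟨⟨i - 1, by omega⟩, by simp only; omega, hj, by
      simp only at this ⊢; omega⟩)
  · rcases mem_diagram.mp h with ⟨t, ht, -⟩ | ⟨t, ht, -⟩ <;> omega

lemma diagram_subset_box (m : DecSeq a k × DecSeq b k) :
    ∀ p ∈ diagram m, p.1 ≤ a ∧ p.2 ≤ b := by
  rintro ⟨i, j⟩ h
  rcases mem_diagram.mp h with ⟨t, rfl, -, hj⟩ | ⟨t, rfl, -, hi⟩
  · have := m.1.le_apply_add t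
    have := m.1.apply_add_le t
    have := m.2.apply_add_le t
    constructor <;> simp only <;> omega
  · have := m.2.le_apply_add t
    have := m.2.apply_add_le t
    have := m.1.apply_add_le t
    constructor <;> simp only <;> omega

lemma rowLen_diagram (m : DecSeq a k × DecSeq b k) (t : Fin k) :
    rowLen (diagram m) (t + 1) = m.2.1 t + t := by
  refine (isFerrers_diagram m).rowLen_eq fun j => ⟨fun h => ?_, fun h => ?_⟩
  · rcases mem_diagram.mp h with ⟨s, hs, hj⟩ | ⟨s, rfl, -⟩
    · obtain rfl : s = t := Fin.ext (by omega)
      exact hj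
    · have := m.2.le_apply_add t
      exact ⟨by omega, by omega⟩
  · exact mem_diagram.mpr (Or.inl ⟨t, rfl, h⟩)

lemma colLen_diagram (m : DecSeq a k × DecSeq b k) (t : Fin k) :
    colLen (diagram m) (t + 1) = m.1.1 t + t := by
  refine (isFerrers_diagram m).colLen_eq fun i => ⟨fun h => ?_, fun h => ?_⟩
  · rcases mem_diagram.mp h with ⟨s, rfl, -⟩ | ⟨s, hs, hi⟩
    · have := m.1.le_apply_add t
      exact ⟨by omega, by omega⟩
    · obtain rfl : s = t := Fin.ext (by omega)
      exact hi
  · exact mem_diagram.mpr (Or.inr ⟨t, rfl, h⟩)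

lemma diagram_subset_diagram_iff {m m' : DecSeq a k × DecSeq b k} :
    diagram m ⊆ diagram m' ↔ m ≤ m' := by
  refine ⟨fun h => ⟨fun t => ?_, fun t => ?_⟩, fun h => ?_⟩
  · have := colLen_mono h (t + 1)
    rw [colLen_diagram, colLen_diagram] at this
    exact Nat.le_of_add_le_add_right this
  · have := rowLen_mono h (t + 1)
    rw [rowLen_diagram, rowLen_diagram] at this
    exact Nat.le_of_add_le_add_right this
  · rintro ⟨i, j⟩ hij
    rw [mem_diagram] at hij ⊢
    rcases hij with ⟨t, hi, hj, hjt⟩ | ⟨t, hj, hi, hit⟩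
    · exact Or.inl ⟨t, hi, hj, hjt.trans (Nat.add_le_add_right (h.2 t) _)⟩
    · exact Or.inr ⟨t, hj, hi, hit.trans (Nat.add_le_add_right (h.1 t) _)⟩

def ofDecSeq (m : DecSeq a k × DecSeq b k) : DkP a b k :=
  ⟨diagram m, isFerrers_diagram m, durfee_diagram m, diagram_subset_box m⟩

lemma isFerrers (D : DkP a b k) : IsFerrers D.1 := D.2.1

lemma square_mem (D : DkP a b k) {i j : ℕ} (hi : 1 ≤ i) (hik : i ≤ k) (hj : 1 ≤ j)
    (hjk : j ≤ k) : (i, j) ∈ D.1 :=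
  (D.isFerrers.durfee_eq_iff.mp D.2.2.1).1 i j hi hik hj hjk

lemma succ_notMem (D : DkP a b k) : (k + 1, k + 1) ∉ D.1 :=
  (D.isFerrers.durfee_eq_iff.mp D.2.2.1).2

lemma le_rowLen (D : DkP a b k) (t : Fin k) : k ≤ rowLen D.1 (t + 1) :=
  le_rowLen_of_mem (D.square_mem (by omega) t.2 t.pos le_rfl)

lemma le_colLen (D : DkP a b k) (t : Fin k) : k ≤ colLen D.1 (t + 1) :=
  le_colLen_of_mem (D.square_mem t.pos le_rfl (by omega) t.2)

lemma rowLen_le (D : DkP a b k) (i : ℕ) : rowLen D.1 i ≤ b :=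
  Finset.sup_le fun p hp => (D.2.2.2 p (mem_filter.mp hp).1).2

lemma colLen_le (D : DkP a b k) (j : ℕ) : colLen D.1 j ≤ a :=
  Finset.sup_le fun p hp => (D.2.2.2 p (mem_filter.mp hp).1).1

lemma antitone_rowLen (D : DkP a b k) : Antitone fun t : Fin k => rowLen D.1 (t + 1) :=
  fun _ _ h => D.isFerrers.rowLen_antitone (by omega) (Nat.add_le_add_right h 1)

lemma antitone_colLen (D : DkP a b k) : Antitone fun t : Fin k => colLen D.1 (t + 1) :=
  fun _ _ h => D.isFerrers.colLen_antitone (by omega) (Nat.add_le_add_right h 1)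

def toDecSeq (D : DkP a b k) : DecSeq a k × DecSeq b k :=
  (ofAntitone _ D.antitone_colLen D.le_colLen fun _ => D.colLen_le _,
    ofAntitone _ D.antitone_rowLen D.le_rowLen fun _ => D.rowLen_le _)

lemma diagram_toDecSeq (D : DkP a b k) : diagram (toDecSeq D) = D.1 := by
  ext ⟨i, j⟩
  simp only [mem_diagram, toDecSeq, ofAntitone_add]
  constructor
  · rintro (⟨t, rfl, hj⟩ | ⟨t, rfl, hi⟩)
    · exact D.isFerrers.mem_iff_le_rowLen.mpr hj
    · exact D.isFerrers.mem_iff_le_colLen.mpr hi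
  · intro h
    obtain ⟨hi, hj⟩ := D.isFerrers.1 _ h
    by_cases hik : i ≤ k
    · obtain ⟨t, rfl⟩ : ∃ t : Fin k, (t : ℕ) + 1 = i := ⟨⟨i - 1, by omega⟩, by simp only; omega⟩
      exact Or.inl ⟨t, rfl, D.isFerrers.mem_iff_le_rowLen.mp h⟩
    · have hjk : j ≤ k := by
        by_contra hjk
        exact D.succ_notMem (D.isFerrers.2 _ h _ (by omega) (by omega) (by omega) (by omega))
      obtain ⟨t, rfl⟩ : ∃ t : Fin k, (t : ℕ) + 1 = j := ⟨⟨j - 1, by omega⟩, by simp only; omega⟩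
      exact Or.inr ⟨t, rfl, D.isFerrers.mem_iff_le_colLen.mp h⟩

lemma toDecSeq_ofDecSeq (m : DecSeq a k × DecSeq b k) : toDecSeq (ofDecSeq m) = m := by
  refine Prod.ext (Subtype.ext (funext fun t => ?_)) (Subtype.ext (funext fun t => ?_))
  · show colLen (diagram m) (t + 1) - t = m.1.1 t
    rw [colLen_diagram, Nat.add_sub_cancel]
  · show rowLen (diagram m) (t + 1) - t = m.2.1 t
    rw [rowLen_diagram, Nat.add_sub_cancel]

def orderIsoDecSeq : DkP a b k ≃o DecSeq a k × DecSeq b k where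
  toFun := toDecSeq
  invFun := ofDecSeq
  left_inv D := Subtype.ext (diagram_toDecSeq D)
  right_inv := toDecSeq_ofDecSeq
  map_rel_iff' {D D'} := by
    show toDecSeq D ≤ toDecSeq D' ↔ D.1 ⊆ D'.1
    rw [← diagram_subset_diagram_iff, diagram_toDecSeq, diagram_toDecSeq]

end DkP

theorem stmt15_general (a b k : ℕ) :
    Nonempty (AkSet (Box a b) k ≃o DkP a b k) :=
  ⟨AkSet.orderIsoDecSeq.trans DkP.orderIsoDecSeq.symm⟩

/-- For `k ≤ min(a,b)`, the poset `(A_k([a] × [b]), ≤_k)` of `k`-element antichains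
of `[a] × [b]` is isomorphic to the poset `D_k(a,b)` of Ferrers diagrams of Durfee
length exactly `k` contained in `[a] × [b]`, ordered by inclusion. -/
theorem stmt15 (a b k : ℕ) (hk : k ≤ min a b) :
    Nonempty (AkSet (Box a b) k ≃o DkP a b k) :=
  stmt15_general a b k
end

section
/- Let m be a nonnegative integer and let P = J^m([2] × [2]) be the m-fold iterated order-ideal poset of [2] × [2]. Then the width of P equals 2, the poset (A_2(P), ≤_2) is a singleton (P has exactly one antichain of size 2), A_0(P) is a singleton, and (A_1(P), ≤_1) is isomorphic to P. -/
/-- Auxiliary: the `m`-fold iterate of the order-ideal construction `J` (realized as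
`LowerSet`, i.e. order ideals = downward-closed sets ordered by inclusion), bundled
with its partial order. -/
def JiterAux (Q : Type) [inst : PartialOrder Q] : ℕ → (T : Type) × PartialOrder T
  | 0 => ⟨Q, inst⟩
  | m + 1 =>
    letI := (JiterAux Q m).2
    ⟨LowerSet (JiterAux Q m).1, inferInstance⟩

/-- `J^m(Q)`: the `m`-fold iterated order-ideal poset of `Q`, with `J^0(Q) = Q`. -/
def Jiter (Q : Type) [PartialOrder Q] (m : ℕ) : Type := (JiterAux Q m).1

instance (Q : Type) [PartialOrder Q] (m : ℕ) : PartialOrder (Jiter Q m) :=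
  (JiterAux Q m).2

/-- The width of a poset: the maximum cardinality of an antichain. -/
noncomputable def widthP (P : Type*) [PartialOrder P] : ℕ :=
  sSup {k : ℕ | ∃ A : Finset P, IsAntichain (· ≤ ·) (A : Set P) ∧ A.card = k}

/-!
`[2] × [2]` has exactly one incomparable pair `{a, b}`, and this property passes from `P` to
`J(P)`: two incomparable order ideals `I, J` are separated by elements `x ∈ I \ J`, `y ∈ J \ I`,
which are incomparable and hence equal to `a` and `b`; since everything above `a` lies above `b`,
an ideal containing `a` but not `b` is `↓a`, so `{I, J} = {↓a, ↓b}`. In a poset whose only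
incomparable pair is `{a, b}`, every antichain with two elements is `{a, b}`, which gives the
width and `A_2`. Singleton antichains `{x} ≺_1 {y}` exactly when `x < y`, so `x ↦ {x}`
identifies `P` with `(A_1(P), ≤_1)`.
-/

section UniqueIncompPair

variable {P : Type*} [PartialOrder P]

def IsUniqueIncompPair (a b : P) : Prop :=
  ∀ x y : P, IncompRel (· ≤ ·) x y ↔ (x = a ∧ y = b) ∨ (x = b ∧ y = a)

namespace IsUniqueIncompPair

variable {a b : P}

lemma symm (h : IsUniqueIncompPair a b) : IsUniqueIncompPair b a :=
  fun x y => (h x y).trans or_comm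

lemma incompRel (h : IsUniqueIncompPair a b) : IncompRel (· ≤ ·) a b :=
  (h a b).2 (.inl ⟨rfl, rfl⟩)

lemma eq_or_eq_of_incompRel (h : IsUniqueIncompPair a b) {x y : P}
    (hxy : IncompRel (· ≤ ·) x y) : x = a ∨ x = b := by
  rcases (h x y).1 hxy with ⟨rfl, -⟩ | ⟨rfl, -⟩
  exacts [.inl rfl, .inr rfl]

lemma le_of_lt (h : IsUniqueIncompPair a b) {z : P} (hz : a < z) : b ≤ z := by
  by_contra hbz
  rcases not_le_iff_lt_or_incompRel.1 hbz with hzb | hzb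
  · exact h.incompRel.not_lt (hz.trans hzb)
  · rcases h.eq_or_eq_of_incompRel hzb with rfl | rfl
    · exact hz.ne rfl
    · exact hbz le_rfl

lemma lowerSet_eq_Iic (h : IsUniqueIncompPair a b) {I : LowerSet P} (ha : a ∈ I) (hb : b ∉ I) :
    I = LowerSet.Iic a := by
  refine le_antisymm (fun z hz => ?_) (LowerSet.Iic_le.2 ha)
  by_contra hza
  rcases not_le_iff_lt_or_incompRel.1 hza with haz | haz
  · exact hb (I.lower (h.le_of_lt haz) hz)
  · rcases h.eq_or_eq_of_incompRel haz.symm with rfl | rfl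
    · exact hza le_rfl
    · exact hb hz

lemma lowerSet (h : IsUniqueIncompPair a b) :
    IsUniqueIncompPair (LowerSet.Iic a) (LowerSet.Iic b) := by
  intro I J
  constructor
  · rintro ⟨hIJ, hJI⟩
    obtain ⟨x, hxI, hxJ⟩ := Set.not_subset.1 hIJ
    obtain ⟨y, hyJ, hyI⟩ := Set.not_subset.1 hJI
    have hxy : IncompRel (· ≤ ·) x y :=
      ⟨fun hle => hxJ (J.lower hle hyJ), fun hle => hyI (I.lower hle hxI)⟩
    rcases (h x y).1 hxy with ⟨rfl, rfl⟩ | ⟨rfl, rfl⟩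
    · exact .inl ⟨h.lowerSet_eq_Iic hxI hyI, h.symm.lowerSet_eq_Iic hyJ hxJ⟩
    · exact .inr ⟨h.symm.lowerSet_eq_Iic hxI hyI, h.lowerSet_eq_Iic hyJ hxJ⟩
  · have hIic : IncompRel (· ≤ ·) (LowerSet.Iic a) (LowerSet.Iic b) := by
      simpa [IncompRel] using h.incompRel
    rintro (⟨rfl, rfl⟩ | ⟨rfl, rfl⟩)
    exacts [hIic, hIic.symm]

section DecidableEq

variable [DecidableEq P]

lemma subset_pair_of_isAntichain (h : IsUniqueIncompPair a b) {s : Finset P}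
    (hs : IsAntichain (· ≤ ·) (s : Set P)) (hcard : 1 < s.card) : s ⊆ {a, b} := by
  intro x hx
  obtain ⟨y, hy, hyx⟩ := s.exists_mem_ne hcard x
  have hxy : IncompRel (· ≤ ·) x y := ⟨hs hx hy hyx.symm, hs hy hx hyx⟩
  simpa using h.eq_or_eq_of_incompRel hxy

lemma isAntichain_pair (h : IsUniqueIncompPair a b) :
    IsAntichain (· ≤ ·) (({a, b} : Finset P) : Set P) := by
  rw [Finset.coe_pair]
  refine IsAntichain.insert (by simp) (fun _ hx _ => ?_) (fun _ hx _ => ?_) <;>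
    rw [Set.mem_singleton_iff.1 hx]
  exacts [h.incompRel.not_ge, h.incompRel.not_le]

lemma card_le_two_of_isAntichain (h : IsUniqueIncompPair a b) {s : Finset P}
    (hs : IsAntichain (· ≤ ·) (s : Set P)) : s.card ≤ 2 := by
  rcases le_or_gt s.card 1 with hcard | hcard
  · omega
  · exact (Finset.card_le_card (h.subset_pair_of_isAntichain hs hcard)).trans Finset.card_le_two

lemma eq_pair_of_isAntichain (h : IsUniqueIncompPair a b) {s : Finset P}
    (hs : IsAntichain (· ≤ ·) (s : Set P)) (hcard : s.card = 2) : s = {a, b} :=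
  Finset.eq_of_subset_of_card_le (h.subset_pair_of_isAntichain hs (by omega))
    (by rw [hcard, Finset.card_pair h.incompRel.ne])

end DecidableEq

lemma widthP_eq_two (h : IsUniqueIncompPair a b) : widthP P = 2 := by
  classical
  refine IsGreatest.csSup_eq ⟨⟨{a, b}, h.isAntichain_pair, Finset.card_pair h.incompRel.ne⟩, ?_⟩
  rintro k ⟨s, hs, rfl⟩
  exact h.card_le_two_of_isAntichain hs

lemma nonempty_akSet_two (h : IsUniqueIncompPair a b) : Nonempty (AkSet P 2) := by
  classical
  exact ⟨⟨{a, b}, h.isAntichain_pair, Finset.card_pair h.incompRel.ne⟩⟩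

lemma subsingleton_akSet_two (h : IsUniqueIncompPair a b) : Subsingleton (AkSet P 2) := by
  classical
  exact ⟨fun A B => Subtype.ext <| (h.eq_pair_of_isAntichain A.2.1 A.2.2).trans
    (h.eq_pair_of_isAntichain B.2.1 B.2.2).symm⟩

end IsUniqueIncompPair

end UniqueIncompPair

lemma isUniqueIncompPair_box :
    IsUniqueIncompPair (⟨(1, 2), by norm_num⟩ : Box 2 2) ⟨(2, 1), by norm_num⟩ := by
  rintro ⟨⟨x₁, x₂⟩, hx⟩ ⟨⟨y₁, y₂⟩, hy⟩
  simp only [IncompRel, Subtype.mk_le_mk, Prod.mk_le_mk, Subtype.mk.injEq, Prod.mk.injEq]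
  omega

lemma exists_isUniqueIncompPair_jiter (m : ℕ) :
    ∃ a b : Jiter (Box 2 2) m, IsUniqueIncompPair a b := by
  induction m with
  | zero => exact ⟨_, _, isUniqueIncompPair_box⟩
  | succ m ih =>
    obtain ⟨a, b, h⟩ := ih
    exact ⟨_, _, h.lowerSet⟩

section AkSet

variable {P : Type*} [PartialOrder P]

lemma nonempty_akSet_zero : Nonempty (AkSet P 0) :=
  ⟨⟨∅, by simp, Finset.card_empty⟩⟩

lemma subsingleton_akSet_zero : Subsingleton (AkSet P 0) :=
  ⟨fun A B => Subtype.ext <|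
    (Finset.card_eq_zero.1 A.2.2).trans (Finset.card_eq_zero.1 B.2.2).symm⟩

def singletonAntichain (x : P) : AkSet P 1 :=
  ⟨{x}, by simp, Finset.card_singleton x⟩

lemma singletonAntichain_bijective : Function.Bijective (singletonAntichain (P := P)) :=
  ⟨fun _ _ hxy => Finset.singleton_injective (congrArg Subtype.val hxy),
    fun A => (Finset.card_eq_one.1 A.2.2).imp fun _ hA => Subtype.ext hA.symm⟩

lemma precK_singletonAntichain_iff {x y : P} :
    PrecK (singletonAntichain x) (singletonAntichain y) ↔ x < y := by
  simp only [PrecK, AkSet.carrier, singletonAntichain, Finset.coe_singleton]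
  constructor
  · rintro ⟨u, v, hu, hv, huv⟩
    obtain ⟨rfl : u = x, -⟩ : u ∈ ({x} : Set P) \ {y} := hu ▸ Set.mem_singleton u
    obtain ⟨rfl : v = y, -⟩ : v ∈ ({y} : Set P) \ {u} := hv ▸ Set.mem_singleton v
    exact huv
  · intro hxy
    refine ⟨x, y, ?_, ?_, hxy⟩
    · exact Set.sdiff_singleton_eq_self (Set.mem_singleton_iff.not.2 hxy.ne')
    · exact Set.sdiff_singleton_eq_self (Set.mem_singleton_iff.not.2 hxy.ne)

lemma singletonAntichain_le_iff {x y : P} :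
    singletonAntichain x ≤ singletonAntichain y ↔ x ≤ y := by
  constructor
  · intro hxy
    have hb := singletonAntichain_bijective (P := P)
    have hstep : ∀ A B, PrecK A B → Function.surjInv hb.2 A ≤ Function.surjInv hb.2 B := by
      intro A B hAB
      rw [← Function.surjInv_eq hb.2 A, ← Function.surjInv_eq hb.2 B] at hAB
      exact (precK_singletonAntichain_iff.1 hAB).le
    simpa only [Relation.reflTransGen_eq_self, Function.onFun,
      Function.leftInverse_surjInv hb _] using Relation.ReflTransGen.lift _ hstep _ _ hxy
  · intro hxy
    rcases hxy.eq_or_lt with rfl | hlt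
    · exact Relation.ReflTransGen.refl
    · exact Relation.ReflTransGen.single (precK_singletonAntichain_iff.2 hlt)

noncomputable def orderIsoAkSetOne : P ≃o AkSet P 1 where
  toEquiv := Equiv.ofBijective _ singletonAntichain_bijective
  map_rel_iff' := singletonAntichain_le_iff

end AkSet

/-- For `P = J^m([2] × [2])`: the width of `P` is `2`; `A_2(P)` is a singleton
(`P` has exactly one antichain of size `2`); `A_0(P)` is a singleton; and
`(A_1(P), ≤_1)` is isomorphic to `P`. -/
theorem stmt17 (m : ℕ) :
    widthP (Jiter (Box 2 2) m) = 2 ∧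
    (Nonempty (AkSet (Jiter (Box 2 2) m) 2) ∧
      Subsingleton (AkSet (Jiter (Box 2 2) m) 2)) ∧
    (Nonempty (AkSet (Jiter (Box 2 2) m) 0) ∧
      Subsingleton (AkSet (Jiter (Box 2 2) m) 0)) ∧
    Nonempty (AkSet (Jiter (Box 2 2) m) 1 ≃o Jiter (Box 2 2) m) := by
  obtain ⟨a, b, h⟩ := exists_isUniqueIncompPair_jiter m
  exact ⟨h.widthP_eq_two, ⟨h.nonempty_akSet_two, h.subsingleton_akSet_two⟩,
    ⟨nonempty_akSet_zero, subsingleton_akSet_zero⟩, ⟨orderIsoAkSetOne.symm⟩⟩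
end

section
/- Let n ≥ 2 and let Φ⁺ = {[i,j] : 1 ≤ i < j ≤ n} denote the type A_{n−1} root poset, where [i,j] denotes ε_i − ε_j and the order is generated by the covering relations [i,j] ⋖ [l,m] iff (i = l and m = j+1) or (l = i−1 and j = m). For 0 ≤ k ≤ n−1, let * be the map sending an antichain A = {[i_1,j_1],…,[i_k,j_k]} ∈ A_k(Φ⁺) to the unique antichain A* ∈ A_{n−1−k}(Φ⁺) whose elements [i'_1,j'_1],…,[i'_{n−1−k},j'_{n−1−k}] satisfy {i'_1,…,i'_{n−1−k}} = {1,…,n−1} \ {j_1−1,…,j_k−1}, {j'_1,…,j'_{n−1−k}} = {2,…,n} \ {i_1+1,…,i_k+1}, with i'_1 < ⋯ < i'_{n−1−k} and j'_1 < ⋯ < j'_{n−1−k}. Then * is a poset isomorphism from (A_k(Φ⁺), ≤_k) to (A_{n−1−k}(Φ⁺), ≤_{n−1−k}); in particular, if A' ⋖ A in A_k(Φ⁺), then A'* ⋖ A* in A_{n−1−k}(Φ⁺). -/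
/-- The type `A_{n-1}` root poset: elements `[i,j]` for `1 ≤ i < j ≤ n`
(representing `εᵢ - εⱼ`). -/
def RootA (n : ℕ) : Type := {p : ℕ × ℕ // 1 ≤ p.1 ∧ p.1 < p.2 ∧ p.2 ≤ n}

/-- First index of a root `[i,j]`. -/
def RootA.fst {n : ℕ} (x : RootA n) : ℕ := (Subtype.val x).1

/-- Second index of a root `[i,j]`. -/
def RootA.snd {n : ℕ} (x : RootA n) : ℕ := (Subtype.val x).2

/-- The root poset order: `[i,j] ≤ [l,m]` iff `l ≤ i` and `j ≤ m`. -/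
instance {n : ℕ} : PartialOrder (RootA n) where
  le x y := y.fst ≤ x.fst ∧ x.snd ≤ y.snd
  le_refl x := ⟨le_refl _, le_refl _⟩
  le_trans x y z h₁ h₂ := ⟨le_trans h₂.1 h₁.1, le_trans h₁.2 h₂.2⟩
  le_antisymm x y h₁ h₂ :=
    Subtype.ext (Prod.ext (le_antisymm h₂.1 h₁.1) (le_antisymm h₁.2 h₂.2))


/-!
An antichain of `Φ⁺` is the same as two strictly increasing lists `i₁ < ⋯ < i_k` and
`j₁ < ⋯ < j_k` with `1 ≤ i_t < j_t ≤ n`, and `≤_k` is the coordinatewise order (smaller `i`'s,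
larger `j`'s): a step `≺_k` moves one root up, and conversely two coordinatewise comparable
antichains are joined by moving one root at a time. Comparing increasing lists coordinatewise
amounts to comparing their counting functions `m ↦ #{t | i_t ≤ m}`, and under `*` these become
"size of an interval minus the counting function of `A`", so `*` is monotone. Since `*` is an
involution, it is an order isomorphism, and order isomorphisms preserve covers.
-/

open Finset Function

namespace Fin

variable {k : ℕ} {R S : Fin k → Prop} [DecidablePred R] [DecidablePred S]

theorem lt_card_filter_iff_of_antitone (hR : Antitone R) (i : Fin k) :
    (i : ℕ) < #{j | R j} ↔ R i := by
  refine ⟨fun hi => ?_, fun hi => ?_⟩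
  · by_contra h
    have hsub : ({j | R j} : Finset (Fin k)) ⊆ Iio i := fun j hj => by
      simp only [mem_filter, mem_univ, true_and] at hj
      exact mem_Iio.2 (lt_of_not_ge fun hij => h (hR hij hj))
    have := card_le_card hsub
    rw [card_Iio] at this
    omega
  · have hsub : Iic i ⊆ ({j | R j} : Finset (Fin k)) := fun j hj =>
      mem_filter.2 ⟨mem_univ j, hR (mem_Iic.1 hj) hi⟩
    have := card_le_card hsub
    rw [card_Iic] at this
    omega

theorem card_filter_le_card_filter_iff_of_antitone (hR : Antitone R) (hS : Antitone S) :
    #{j | S j} ≤ #{j | R j} ↔ ∀ i, S i → R i :=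
  ⟨fun h i hi => (lt_card_filter_iff_of_antitone hR i).1
      (((lt_card_filter_iff_of_antitone hS i).2 hi).trans_le h),
    fun h => card_le_card (monotone_filter_right _ fun i _ => h i)⟩

variable {α : Type*} [LinearOrder α] {f g : Fin k → α}

theorem forall_le_iff_card_filter_le (hf : Monotone f) (hg : Monotone g) :
    (∀ i, f i ≤ g i) ↔ ∀ a, #{i | g i ≤ a} ≤ #{i | f i ≤ a} := by
  simp_rw [card_filter_le_card_filter_iff_of_antitone (fun _ _ h ha => (hf h).trans ha)
    (fun _ _ h ha => (hg h).trans ha)]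
  exact ⟨fun h a i hi => (h i).trans hi, fun h i => h (g i) i le_rfl⟩

theorem forall_lt_iff_card_filter_le (hf : Monotone f) (hg : Monotone g) :
    (∀ i, f i < g i) ↔ ∀ a, #{i | g i ≤ a} ≤ #{i | f i < a} := by
  simp_rw [card_filter_le_card_filter_iff_of_antitone (fun _ _ h ha => (hf h).trans_lt ha)
    (fun _ _ h ha => (hg h).trans ha)]
  exact ⟨fun h a i hi => (h i).trans_le hi, fun h i => h (g i) i le_rfl⟩

end Fin

namespace Finset

variable {α β : Type*} [DecidableEq β]

theorem card_filter_le_of_sdiff_eq_singleton {s t : Finset β} {a b : β} {R : β → Prop}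
    [DecidablePred R] (hst : s \ t = {a}) (hts : t \ s = {b}) (hab : R a → R b) :
    #{x ∈ s | R x} ≤ #{x ∈ t | R x} := by
  have split (u v : Finset β) : #{x ∈ u | R x} = #{x ∈ u \ v | R x} + #{x ∈ u ∩ v | R x} := by
    rw [← card_union_of_disjoint (disjoint_filter_filter (disjoint_sdiff_inter u v)),
      ← filter_union, sdiff_union_inter]
  rw [split s t, split t s, hst, hts, inter_comm, filter_singleton, filter_singleton]
  split_ifs <;> simp_all

theorem card_filter_orderEmbOfFin [LinearOrder α] (s : Finset α) {k : ℕ} (h : #s = k)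
    (R : α → Prop) [DecidablePred R] : #{i | R (s.orderEmbOfFin h i)} = #{x ∈ s | R x} := by
  conv_rhs => rw [← map_orderEmbOfFin_univ s h, filter_map, card_map]
  rfl

theorem image_sdiff_image_of_eq_off [Fintype α] {f g : α → β}
    {i : α} (hfg : ∀ j ≠ i, f j = g j) (hi : ∀ j, f i ≠ g j) :
    univ.image f \ univ.image g = {f i} := by
  ext x
  simp only [mem_sdiff, mem_image, mem_univ, true_and, mem_singleton, not_exists]
  constructor
  · rintro ⟨⟨j, rfl⟩, hj⟩
    by_contra hji
    exact hj j (hfg j fun h => hji (h ▸ rfl)).symm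
  · rintro rfl
    exact ⟨⟨i, rfl⟩, fun j hj => hi j hj.symm⟩

theorem card_filter_sdiff_of_subset {s t : Finset β} (h : s ⊆ t) (R : β → Prop)
    [DecidablePred R] : #{x ∈ t \ s | R x} = #{x ∈ t | R x} - #{x ∈ s | R x} := by
  rw [← card_sdiff_of_subset (filter_subset_filter R h)]
  congr 1
  ext x
  simp only [mem_filter, mem_sdiff]
  tauto

theorem card_filter_image_of_injective {f : α → β} (hf : Injective f) (s : Finset α)
    (R : β → Prop) [DecidablePred R] : #{x ∈ s.image f | R x} = #{x ∈ s | R (f x)} := by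
  rw [filter_image, card_image_of_injective _ hf]

end Finset

theorem StrictMono.update {ι α : Type*} [LinearOrder ι] [Preorder α]
    {f : ι → α} (hf : StrictMono f) {i : ι} {v : α} (hlt : ∀ j < i, f j < v)
    (hgt : ∀ j, i < j → v < f j) : StrictMono (Function.update f i v) := by
  intro a b hab
  rcases eq_or_ne a i with rfl | ha
  · rw [update_self, update_of_ne hab.ne']; exact hgt b hab
  · rcases eq_or_ne b i with rfl | hbi
    · rw [update_self, update_of_ne ha]; exact hlt a hab
    · rw [update_of_ne ha, update_of_ne hbi]; exact hf hab

namespace RootA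

variable {n k : ℕ}

instance : DecidableEq (RootA n) := inferInstanceAs (DecidableEq (Subtype _))

theorem one_le_fst (x : RootA n) : 1 ≤ x.fst := x.2.1

theorem fst_lt_snd (x : RootA n) : x.fst < x.snd := x.2.2.1

theorem snd_le (x : RootA n) : x.snd ≤ n := x.2.2.2

theorem ext {x y : RootA n} (h₁ : x.fst = y.fst) (h₂ : x.snd = y.snd) : x = y :=
  Subtype.ext (Prod.ext h₁ h₂)

theorem eq_of_fst_le_of_snd_le {A : AkSet (RootA n) k} {x y : RootA n} (hx : x ∈ A.carrier)
    (hy : y ∈ A.carrier) (h₁ : y.fst ≤ x.fst) (h₂ : x.snd ≤ y.snd) : x = y := by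
  by_contra hne
  exact A.2.1 hx hy hne ⟨h₁, h₂⟩

theorem injOn_fst (A : AkSet (RootA n) k) :
    Set.InjOn RootA.fst (A.carrier : Set (RootA n)) := fun x hx y hy h => by
  rcases le_total x.snd y.snd with h₂ | h₂
  · exact eq_of_fst_le_of_snd_le hx hy h.ge h₂
  · exact (eq_of_fst_le_of_snd_le hy hx h.le h₂).symm

theorem injOn_snd (A : AkSet (RootA n) k) :
    Set.InjOn RootA.snd (A.carrier : Set (RootA n)) := fun x hx y hy h => by
  rcases le_total x.fst y.fst with h₁ | h₁
  · exact (eq_of_fst_le_of_snd_le hy hx h₁ h.ge).symm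
  · exact eq_of_fst_le_of_snd_le hx hy h₁ h.le

theorem snd_lt_snd_of_fst_lt {A : AkSet (RootA n) k} {x y : RootA n} (hx : x ∈ A.carrier)
    (hy : y ∈ A.carrier) (h : x.fst < y.fst) : x.snd < y.snd := by
  by_contra! h₂
  exact h.ne' (congrArg RootA.fst (eq_of_fst_le_of_snd_le hy hx h.le h₂))

end RootA

/-! ### Antichains as pairs of increasing sequences -/

namespace AkSet

variable {n k : ℕ} (A : AkSet (RootA n) k)

theorem ext {P : Type*} [PartialOrder P] {A B : AkSet P k}
    (h : A.carrier = B.carrier) : A = B :=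
  Subtype.ext h

theorem card_carrier_s19 : #A.carrier = k := A.2.2

theorem card_image_fst : #(A.carrier.image RootA.fst) = k := by
  rw [card_image_of_injOn (RootA.injOn_fst A), card_carrier_s19]

theorem card_image_snd : #(A.carrier.image RootA.snd) = k := by
  rw [card_image_of_injOn (RootA.injOn_snd A), card_carrier_s19]

noncomputable def fstSeq : Fin k → ℕ :=
  (A.carrier.image RootA.fst).orderEmbOfFin A.card_image_fst

noncomputable def sndSeq : Fin k → ℕ :=
  (A.carrier.image RootA.snd).orderEmbOfFin A.card_image_snd

theorem exists_mem_fst_snd (i : Fin k) :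
    ∃ x ∈ A.carrier, x.fst = A.fstSeq i ∧ x.snd = A.sndSeq i := by
  have hfst (j : Fin k) : ∃ x ∈ A.carrier, x.fst = A.fstSeq j :=
    mem_image.1 (orderEmbOfFin_mem _ _ j)
  choose x hxA hx using hfst
  -- Listing the roots of `A` by increasing first coordinate lists their second coordinates
  -- increasingly too, so it produces the sorted list of second coordinates.
  have hsnd : A.sndSeq = fun j => (x j).snd :=
    .symm <| orderEmbOfFin_unique _ (fun j => mem_image_of_mem _ (hxA j)) fun j j' hjj' =>
      RootA.snd_lt_snd_of_fst_lt (hxA j) (hxA j') (by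
        rw [hx, hx]; exact (orderEmbOfFin _ _).strictMono hjj')
  exact ⟨x i, hxA i, hx i, by rw [hsnd]⟩

end AkSet

/-- An antichain of `k` roots, recorded by its first and its second coordinates, both listed
increasingly; in an antichain of `RootA n` the two lists are paired in the same order. -/
@[ext]
structure AntichainCoords (n k : ℕ) where
  fst : Fin k → ℕ
  snd : Fin k → ℕ
  fst_strictMono : StrictMono fst
  snd_strictMono : StrictMono snd
  one_le_fst : ∀ i, 1 ≤ fst i
  fst_lt_snd : ∀ i, fst i < snd i
  snd_le : ∀ i, snd i ≤ n

namespace AntichainCoords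

variable {n k : ℕ}

instance : Preorder (AntichainCoords n k) where
  le c d := ∀ i, d.fst i ≤ c.fst i ∧ c.snd i ≤ d.snd i
  le_refl _ _ := ⟨le_rfl, le_rfl⟩
  le_trans _ _ _ hcd hde i := ⟨(hde i).1.trans (hcd i).1, (hcd i).2.trans (hde i).2⟩

def root (c : AntichainCoords n k) (i : Fin k) : RootA n :=
  ⟨(c.fst i, c.snd i), c.one_le_fst i, c.fst_lt_snd i, c.snd_le i⟩

@[simp] theorem fst_root (c : AntichainCoords n k) (i : Fin k) : (c.root i).fst = c.fst i := rfl

@[simp] theorem snd_root (c : AntichainCoords n k) (i : Fin k) : (c.root i).snd = c.snd i := rfl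

theorem root_injective (c : AntichainCoords n k) : Function.Injective c.root :=
  fun _ _ h => c.fst_strictMono.injective (congrArg RootA.fst h)

def rootEmb (c : AntichainCoords n k) : Fin k ↪ RootA n := ⟨c.root, c.root_injective⟩

theorem isAntichain_range_root (c : AntichainCoords n k) :
    IsAntichain (· ≤ ·) (Set.range c.root) := by
  rintro _ ⟨i, rfl⟩ _ ⟨j, rfl⟩ hne ⟨hfst, hsnd⟩
  rcases lt_trichotomy i j with hij | rfl | hij
  · exact (c.fst_strictMono hij).not_ge hfst
  · exact hne rfl
  · exact (c.snd_strictMono hij).not_ge hsnd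

def toAk (c : AntichainCoords n k) : AkSet (RootA n) k :=
  ⟨univ.map c.rootEmb, by simpa [rootEmb] using c.isAntichain_range_root, by simp⟩

theorem carrier_toAk (c : AntichainCoords n k) : c.toAk.carrier = univ.map c.rootEmb := rfl

theorem image_toAk {β : Type*} (c : AntichainCoords n k) (f : RootA n → β) :
    f '' (c.toAk.carrier : Set (RootA n)) = Set.range (f ∘ c.root) := by
  simp [carrier_toAk, rootEmb, Set.range_comp]

theorem card_filter_toAk (c : AntichainCoords n k) (R : RootA n → Prop) [DecidablePred R] :
    #{x ∈ c.toAk.carrier | R x} = #{i | R (c.root i)} := by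
  rw [carrier_toAk, filter_map, card_map]
  rfl

noncomputable def ofAk (A : AkSet (RootA n) k) : AntichainCoords n k where
  fst := A.fstSeq
  snd := A.sndSeq
  fst_strictMono := (orderEmbOfFin _ _).strictMono
  snd_strictMono := (orderEmbOfFin _ _).strictMono
  one_le_fst i := by
    obtain ⟨x, -, hx, -⟩ := A.exists_mem_fst_snd i
    exact hx ▸ x.one_le_fst
  fst_lt_snd i := by
    obtain ⟨x, -, hx, hx'⟩ := A.exists_mem_fst_snd i
    exact hx ▸ hx' ▸ x.fst_lt_snd
  snd_le i := by
    obtain ⟨x, -, -, hx'⟩ := A.exists_mem_fst_snd i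
    exact hx' ▸ x.snd_le

theorem toAk_ofAk (A : AkSet (RootA n) k) : (ofAk A).toAk = A := by
  refine AkSet.ext (eq_of_subset_of_card_le (fun x hx => ?_) ?_)
  · obtain ⟨i, -, rfl⟩ := mem_map.1 hx
    obtain ⟨y, hy, hfst, hsnd⟩ := A.exists_mem_fst_snd i
    show (ofAk A).root i ∈ A.carrier
    rwa [RootA.ext (x := (ofAk A).root i) hfst.symm hsnd.symm]
  · rw [A.card_carrier_s19, (ofAk A).toAk.card_carrier_s19]

theorem image_fst_carrier_toAk (c : AntichainCoords n k) :
    c.toAk.carrier.image RootA.fst = univ.image c.fst := by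
  rw [carrier_toAk, map_eq_image, image_image]
  rfl

theorem image_snd_carrier_toAk (c : AntichainCoords n k) :
    c.toAk.carrier.image RootA.snd = univ.image c.snd := by
  rw [carrier_toAk, map_eq_image, image_image]
  rfl

theorem ofAk_toAk (c : AntichainCoords n k) : ofAk c.toAk = c := by
  ext1
  · exact (orderEmbOfFin_unique _ (fun i => by
      rw [image_fst_carrier_toAk]; exact mem_image_of_mem _ (mem_univ i)) c.fst_strictMono).symm
  · exact (orderEmbOfFin_unique _ (fun i => by
      rw [image_snd_carrier_toAk]; exact mem_image_of_mem _ (mem_univ i)) c.snd_strictMono).symm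

/-! ### `≤_k` is the coordinatewise order -/

theorem le_of_precK {c d : AntichainCoords n k} (h : PrecK c.toAk d.toAk) : c ≤ d := by
  obtain ⟨a, b, hcd, hdc, hab⟩ := h
  rw [← coe_sdiff, ← coe_singleton, coe_inj] at hcd hdc
  have hfst (m : ℕ) : #{i | c.fst i ≤ m} ≤ #{i | d.fst i ≤ m} := by
    have := card_filter_le_of_sdiff_eq_singleton hcd hdc (R := fun x : RootA n => x.fst ≤ m)
      hab.le.1.trans
    rwa [card_filter_toAk, card_filter_toAk] at this
  have hsnd (m : ℕ) : #{i | d.snd i ≤ m} ≤ #{i | c.snd i ≤ m} := by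
    have := card_filter_le_of_sdiff_eq_singleton hdc hcd (R := fun x : RootA n => x.snd ≤ m)
      hab.le.2.trans
    rwa [card_filter_toAk, card_filter_toAk] at this
  exact fun i =>
    ⟨(Fin.forall_le_iff_card_filter_le d.fst_strictMono.monotone
        c.fst_strictMono.monotone).2 hfst i,
      (Fin.forall_le_iff_card_filter_le c.snd_strictMono.monotone
        d.snd_strictMono.monotone).2 hsnd i⟩

theorem precK_toAk_of_root_eq_off {c e : AntichainCoords n k} (hce : c ≤ e) {i : Fin k}
    (hi : c.root i ≠ e.root i) (hoff : ∀ j ≠ i, c.root j = e.root j) :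
    PrecK c.toAk e.toAk := by
  have hce' (j : Fin k) : c.root i ≠ e.root j := by
    rcases eq_or_ne j i with rfl | hj
    · exact hi
    · rw [← hoff j hj]; exact c.root_injective.ne hj.symm
  have hec' (j : Fin k) : e.root i ≠ c.root j := by
    rcases eq_or_ne j i with rfl | hj
    · exact hi.symm
    · rw [hoff j hj]; exact e.root_injective.ne hj.symm
  refine ⟨c.root i, e.root i, ?_, ?_, lt_of_le_of_ne (hce i) hi⟩ <;>
    rw [← coe_sdiff, ← coe_singleton, coe_inj, carrier_toAk, carrier_toAk, map_eq_image,
      map_eq_image]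
  · exact image_sdiff_image_of_eq_off hoff hce'
  · exact image_sdiff_image_of_eq_off (fun j hj => (hoff j hj).symm) hec'

/-- With truncated subtraction this is the `ℓ¹`-distance from `c` to `d` only when `c ≤ d`. -/
def coordDist (c d : AntichainCoords n k) : ℕ :=
  ∑ i, (c.fst i - d.fst i + (d.snd i - c.snd i))

theorem coordDist_lt {c e d : AntichainCoords n k} (hce : c ≤ e) (hed : e ≤ d) {i : Fin k}
    (hi : c.root i ≠ e.root i) : coordDist e d < coordDist c d := by
  refine sum_lt_sum (fun j _ => ?_) ⟨i, mem_univ i, ?_⟩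
  · have := hce j; have := hed j; omega
  · have := hce i; have := hed i
    have : c.fst i ≠ e.fst i ∨ c.snd i ≠ e.snd i := by
      by_contra! h; exact hi (RootA.ext h.1 h.2)
    omega

theorem exists_le_of_fst_ne {c d : AntichainCoords n k} (hcd : c ≤ d) (hne : c.fst ≠ d.fst) :
    ∃ e, c ≤ e ∧ e ≤ d ∧ ∃ i, c.root i ≠ e.root i ∧ ∀ j ≠ i, c.root j = e.root j := by
  obtain ⟨i, hi, hmin⟩ := wellFounded_lt.has_min {i | c.fst i ≠ d.fst i} (ne_iff.1 hne)
  have hbefore (j) (hj : j < i) : c.fst j = d.fst j := not_not.1 fun h => hmin j h hj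
  have hlt : d.fst i < c.fst i := lt_of_le_of_ne (hcd i).1 (Ne.symm hi)
  -- Lowering `fst` to `d.fst` at the first index where `c` and `d` differ keeps it strictly
  -- increasing, since before that index `c.fst` already agrees with `d.fst`.
  let e : AntichainCoords n k :=
    { c with
      fst := update c.fst i (d.fst i)
      fst_strictMono := c.fst_strictMono.update (fun j hj => hbefore j hj ▸ d.fst_strictMono hj)
        fun j hj => hlt.trans (c.fst_strictMono hj)
      one_le_fst := fun j => by
        rw [update_apply]; split_ifs
        exacts [d.one_le_fst i, c.one_le_fst j]
      fst_lt_snd := fun j => by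
        rw [update_apply]; split_ifs with hj
        exacts [hj ▸ hlt.trans (c.fst_lt_snd i), c.fst_lt_snd j] }
  refine ⟨e, fun j => ⟨?_, le_rfl⟩, fun j => ⟨?_, (hcd j).2⟩, i, ?_, fun j hj => ?_⟩
  · show update c.fst i (d.fst i) j ≤ c.fst j
    rw [update_apply]; split_ifs with hj
    exacts [hj ▸ hlt.le, le_rfl]
  · show d.fst j ≤ update c.fst i (d.fst i) j
    rw [update_apply]; split_ifs with hj
    exacts [hj ▸ le_rfl, (hcd j).1]
  · exact fun h => hi (by simpa [e] using congrArg RootA.fst h)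
  · exact RootA.ext (by simp [e, hj]) rfl

theorem exists_le_of_snd_ne {c d : AntichainCoords n k} (hcd : c ≤ d) (hne : c.snd ≠ d.snd) :
    ∃ e, c ≤ e ∧ e ≤ d ∧ ∃ i, c.root i ≠ e.root i ∧ ∀ j ≠ i, c.root j = e.root j := by
  obtain ⟨i, hi, hmax⟩ := wellFounded_gt.has_min {i | c.snd i ≠ d.snd i} (ne_iff.1 hne)
  have hafter (j) (hj : i < j) : c.snd j = d.snd j := not_not.1 fun h => hmax j h hj
  have hlt : c.snd i < d.snd i := lt_of_le_of_ne (hcd i).2 hi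
  -- Symmetrically, `snd` is raised to `d.snd` at the last index where they differ.
  let e : AntichainCoords n k :=
    { c with
      snd := update c.snd i (d.snd i)
      snd_strictMono := c.snd_strictMono.update (fun j hj => (c.snd_strictMono hj).trans hlt)
        fun j hj => hafter j hj ▸ d.snd_strictMono hj
      fst_lt_snd := fun j => by
        rw [update_apply]; split_ifs with hj
        exacts [hj ▸ (c.fst_lt_snd i).trans hlt, c.fst_lt_snd j]
      snd_le := fun j => by
        rw [update_apply]; split_ifs
        exacts [d.snd_le i, c.snd_le j] }
  refine ⟨e, fun j => ⟨le_rfl, ?_⟩, fun j => ⟨(hcd j).1, ?_⟩, i, ?_, fun j hj => ?_⟩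
  · show c.snd j ≤ update c.snd i (d.snd i) j
    rw [update_apply]; split_ifs with hj
    exacts [hj ▸ hlt.le, le_rfl]
  · show update c.snd i (d.snd i) j ≤ d.snd j
    rw [update_apply]; split_ifs with hj
    exacts [hj ▸ le_rfl, (hcd j).2]
  · exact fun h => hi (by simpa [e] using congrArg RootA.snd h)
  · exact RootA.ext rfl (by simp [e, hj])

theorem leK_toAk_of_le {c d : AntichainCoords n k} (h : c ≤ d) : LeK c.toAk d.toAk := by
  induction hm : coordDist c d using Nat.strong_induction_on generalizing c with
  | _ m ih =>
  by_cases hcd : c = d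
  · exact hcd ▸ .refl
  obtain ⟨e, hce, hed, i, hi, hoff⟩ : ∃ e, c ≤ e ∧ e ≤ d ∧
      ∃ i, c.root i ≠ e.root i ∧ ∀ j ≠ i, c.root j = e.root j := by
    by_cases hfst : c.fst = d.fst
    · exact exists_le_of_snd_ne h fun hsnd => hcd (AntichainCoords.ext hfst hsnd)
    · exact exists_le_of_fst_ne h hfst
  exact .head (precK_toAk_of_root_eq_off hce hi hoff)
    (ih _ (hm ▸ coordDist_lt hce hed hi) hed rfl)

theorem ofAk_le_ofAk_of_leK {A B : AkSet (RootA n) k} (h : LeK A B) : ofAk A ≤ ofAk B := by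
  induction h with
  | refl => exact le_rfl
  | tail _ hprec ih =>
    refine ih.trans (le_of_precK ?_)
    rwa [toAk_ofAk, toAk_ofAk]

theorem leK_toAk_iff {c d : AntichainCoords n k} : LeK c.toAk d.toAk ↔ c ≤ d :=
  ⟨fun h => ofAk_toAk c ▸ ofAk_toAk d ▸ ofAk_le_ofAk_of_leK h, leK_toAk_of_le⟩

noncomputable def orderIsoAk : AntichainCoords n k ≃o AkSet (RootA n) k where
  toFun := toAk
  invFun := ofAk
  left_inv := ofAk_toAk
  right_inv := toAk_ofAk
  map_rel_iff' := leK_toAk_iff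

/-! ### Complementation -/

section Dual

variable {j : ℕ} (c : AntichainCoords n k)

theorem snd_sub_one_strictMono : StrictMono fun i => c.snd i - 1 := fun i i' h => by
  have := c.snd_strictMono h; have := c.fst_lt_snd i
  dsimp only; omega

theorem fst_add_one_strictMono : StrictMono fun i => c.fst i + 1 := fun _ _ h => by
  have := c.fst_strictMono h
  dsimp only; omega

theorem image_snd_sub_one_subset : univ.image (fun i => c.snd i - 1) ⊆ Icc 1 (n - 1) := by
  intro x hx
  obtain ⟨i, -, rfl⟩ := mem_image.1 hx
  have := c.one_le_fst i; have := c.fst_lt_snd i; have := c.snd_le i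
  rw [mem_Icc]; omega

theorem image_fst_add_one_subset : univ.image (fun i => c.fst i + 1) ⊆ Icc 2 n := by
  intro x hx
  obtain ⟨i, -, rfl⟩ := mem_image.1 hx
  have := c.one_le_fst i; have := c.fst_lt_snd i; have := c.snd_le i
  rw [mem_Icc]; omega

def dualFsts : Finset ℕ := Icc 1 (n - 1) \ univ.image fun i => c.snd i - 1

def dualSnds : Finset ℕ := Icc 2 n \ univ.image fun i => c.fst i + 1

theorem card_dualFsts (hj : n - 1 - k = j) : #c.dualFsts = j := by
  rw [dualFsts, card_sdiff_of_subset c.image_snd_sub_one_subset,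
    card_image_of_injective _ c.snd_sub_one_strictMono.injective, Nat.card_Icc, card_univ,
    Fintype.card_fin]
  omega

theorem card_dualSnds (hj : n - 1 - k = j) : #c.dualSnds = j := by
  rw [dualSnds, card_sdiff_of_subset c.image_fst_add_one_subset,
    card_image_of_injective _ c.fst_add_one_strictMono.injective, Nat.card_Icc, card_univ,
    Fintype.card_fin]
  omega

theorem card_filter_dualFsts (R : ℕ → Prop) [DecidablePred R] :
    #{x ∈ c.dualFsts | R x} = #{x ∈ Icc 1 (n - 1) | R x} - #{i | R (c.snd i - 1)} := by
  rw [dualFsts, card_filter_sdiff_of_subset c.image_snd_sub_one_subset,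
    card_filter_image_of_injective c.snd_sub_one_strictMono.injective]

theorem card_filter_dualSnds (R : ℕ → Prop) [DecidablePred R] :
    #{x ∈ c.dualSnds | R x} = #{x ∈ Icc 2 n | R x} - #{i | R (c.fst i + 1)} := by
  rw [dualSnds, card_filter_sdiff_of_subset c.image_fst_add_one_subset,
    card_filter_image_of_injective c.fst_add_one_strictMono.injective]

theorem card_filter_Icc_two_le (n a : ℕ) :
    #{x ∈ Icc 2 n | x ≤ a} = #{x ∈ Icc 1 (n - 1) | x < a} :=
  card_nbij' (· - 1) (· + 1) (fun x hx => by simp at hx ⊢; omega)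
    (fun x hx => by simp at hx ⊢; omega) (fun x hx => by simp at hx; dsimp only; omega)
    fun _ _ => rfl

/-- The complement `A*`; the size `j = n - 1 - k` is passed as an equation so that `*` can be
applied twice. -/
noncomputable def dual (hj : n - 1 - k = j) : AntichainCoords n j where
  fst := c.dualFsts.orderEmbOfFin (c.card_dualFsts hj)
  snd := c.dualSnds.orderEmbOfFin (c.card_dualSnds hj)
  fst_strictMono := (orderEmbOfFin _ _).strictMono
  snd_strictMono := (orderEmbOfFin _ _).strictMono
  one_le_fst i := (mem_Icc.1 (mem_sdiff.1 (orderEmbOfFin_mem _ _ i)).1).1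
  fst_lt_snd := by
    refine (Fin.forall_lt_iff_card_filter_le (orderEmbOfFin _ _).strictMono.monotone
      (orderEmbOfFin _ _).strictMono.monotone).2 fun a => ?_
    rw [card_filter_orderEmbOfFin _ _ (· ≤ a), card_filter_orderEmbOfFin _ _ (· < a),
      card_filter_dualFsts, card_filter_dualSnds, card_filter_Icc_two_le]
    refine Nat.sub_le_sub_left (card_le_card (monotone_filter_right _ fun i _ h => ?_)) _
    have := c.fst_lt_snd i
    omega
  snd_le i := (mem_Icc.1 (mem_sdiff.1 (orderEmbOfFin_mem _ _ i)).1).2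

end Dual

variable {j : ℕ}

theorem dual_le_dual {c d : AntichainCoords n k} (hj : n - 1 - k = j) (h : c ≤ d) :
    c.dual hj ≤ d.dual hj := by
  have hfst := (Fin.forall_le_iff_card_filter_le (d.dual hj).fst_strictMono.monotone
    (c.dual hj).fst_strictMono.monotone).2 fun a => by
    show #{i | c.dualFsts.orderEmbOfFin _ i ≤ a} ≤ #{i | d.dualFsts.orderEmbOfFin _ i ≤ a}
    rw [card_filter_orderEmbOfFin _ _ (· ≤ a), card_filter_orderEmbOfFin _ _ (· ≤ a),
      card_filter_dualFsts, card_filter_dualFsts]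
    refine Nat.sub_le_sub_left (card_le_card (monotone_filter_right _ fun i _ hi => ?_)) _
    have := (h i).2
    omega
  have hsnd := (Fin.forall_le_iff_card_filter_le (c.dual hj).snd_strictMono.monotone
    (d.dual hj).snd_strictMono.monotone).2 fun a => by
    show #{i | d.dualSnds.orderEmbOfFin _ i ≤ a} ≤ #{i | c.dualSnds.orderEmbOfFin _ i ≤ a}
    rw [card_filter_orderEmbOfFin _ _ (· ≤ a), card_filter_orderEmbOfFin _ _ (· ≤ a),
      card_filter_dualSnds, card_filter_dualSnds]
    refine Nat.sub_le_sub_left (card_le_card (monotone_filter_right _ fun i _ hi => ?_)) _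
    have := (h i).1
    omega
  exact fun i => ⟨hfst i, hsnd i⟩

theorem dual_dual (c : AntichainCoords n k) (hj : n - 1 - k = j) (hk : n - 1 - j = k) :
    (c.dual hj).dual hk = c := by
  ext1
  · refine (orderEmbOfFin_unique _ (fun i => mem_sdiff.2 ⟨?_, fun hi => ?_⟩)
      c.fst_strictMono).symm
    · have := c.one_le_fst i; have := c.fst_lt_snd i; have := c.snd_le i
      rw [mem_Icc]; omega
    obtain ⟨l, -, hl⟩ := mem_image.1 hi
    obtain ⟨hIcc, hnot⟩ := mem_sdiff.1 (orderEmbOfFin_mem c.dualSnds (c.card_dualSnds hj) l)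
    refine hnot (mem_image.2 ⟨i, mem_univ i, ?_⟩)
    change c.dualSnds.orderEmbOfFin _ l - 1 = c.fst i at hl
    rw [mem_Icc] at hIcc
    omega
  · refine (orderEmbOfFin_unique _ (fun i => mem_sdiff.2 ⟨?_, fun hi => ?_⟩)
      c.snd_strictMono).symm
    · have := c.one_le_fst i; have := c.fst_lt_snd i; have := c.snd_le i
      rw [mem_Icc]; omega
    obtain ⟨l, -, hl⟩ := mem_image.1 hi
    obtain ⟨-, hnot⟩ := mem_sdiff.1 (orderEmbOfFin_mem c.dualFsts (c.card_dualFsts hj) l)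
    refine hnot (mem_image.2 ⟨i, mem_univ i, ?_⟩)
    change c.dualFsts.orderEmbOfFin _ l + 1 = c.snd i at hl
    omega

noncomputable def dualOrderIso (hk : k ≤ n - 1) :
    AntichainCoords n k ≃o AntichainCoords n (n - 1 - k) where
  toFun c := c.dual rfl
  invFun c := c.dual (by omega)
  left_inv c := c.dual_dual _ _
  right_inv c := c.dual_dual _ _
  map_rel_iff' {c d} := ⟨fun (h : c.dual rfl ≤ d.dual rfl) => by
    have := dual_le_dual (j := k) (by omega) h
    rwa [dual_dual, dual_dual] at this, dual_le_dual rfl⟩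

theorem image_fst_toAk_dual (c : AntichainCoords n k) (hj : n - 1 - k = j) :
    RootA.fst '' ((c.dual hj).toAk.carrier : Set (RootA n)) =
      Set.Icc 1 (n - 1) \ (fun x => x.snd - 1) '' (c.toAk.carrier : Set (RootA n)) := by
  rw [image_toAk, image_toAk]
  exact (range_orderEmbOfFin _ _).trans (by simp [dualFsts]; rfl)

theorem image_snd_toAk_dual (c : AntichainCoords n k) (hj : n - 1 - k = j) :
    RootA.snd '' ((c.dual hj).toAk.carrier : Set (RootA n)) =
      Set.Icc 2 n \ (fun x => x.fst + 1) '' (c.toAk.carrier : Set (RootA n)) := by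
  rw [image_toAk, image_toAk]
  exact (range_orderEmbOfFin _ _).trans (by simp [dualSnds]; rfl)

end AntichainCoords

theorem CovK.map_orderIso {P Q : Type*} [PartialOrder P] [PartialOrder Q] {k j : ℕ}
    (e : AkSet P k ≃o AkSet Q j) {A B : AkSet P k} (h : CovK A B) : CovK (e A) (e B) := by
  have hlt (X Y : AkSet P k) : LtK (e X) (e Y) ↔ LtK X Y :=
    and_congr e.le_iff_le e.injective.ne_iff
  refine ⟨(hlt A B).2 h.1, fun C hAC hCB => ?_⟩
  rw [← e.apply_symm_apply C, hlt] at hAC hCB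
  exact h.2 _ hAC hCB

open AntichainCoords in
theorem stmt19_general (n k : ℕ) (hk : k ≤ n - 1) :
    ∃ e : AkSet (RootA n) k ≃o AkSet (RootA n) (n - 1 - k),
      (∀ A : AkSet (RootA n) k,
        RootA.fst '' ((e A).carrier : Set (RootA n)) =
          Set.Icc 1 (n - 1) \ ((fun p => p.snd - 1) '' (A.carrier : Set (RootA n))) ∧
        RootA.snd '' ((e A).carrier : Set (RootA n)) =
          Set.Icc 2 n \ ((fun p => p.fst + 1) '' (A.carrier : Set (RootA n)))) ∧
      (∀ A' A : AkSet (RootA n) k, CovK A' A → CovK (e A') (e A)) := by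
  refine ⟨orderIsoAk.symm.trans ((dualOrderIso hk).trans orderIsoAk), fun A => ?_,
    fun A' A => CovK.map_orderIso _⟩
  have hfst := image_fst_toAk_dual (ofAk A) rfl
  have hsnd := image_snd_toAk_dual (ofAk A) rfl
  rw [toAk_ofAk] at hfst hsnd
  exact ⟨hfst, hsnd⟩

/-- Panyushev's complementation `*` on antichains of the type `A_{n-1}` root poset:
for `0 ≤ k ≤ n-1`, the map sending an antichain `A = {[i₁,j₁],…,[i_k,j_k]}` to the
unique antichain `A*` of size `n-1-k` whose first indices form the set
`{1,…,n-1} \ {j₁-1,…,j_k-1}` and whose second indices form the set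
`{2,…,n} \ {i₁+1,…,i_k+1}` (paired in increasing order; for an antichain of this
poset, the pairing of the two increasing coordinate lists is forced) is a poset
isomorphism `(A_k(Φ⁺), ≤_k) ≅ (A_{n-1-k}(Φ⁺), ≤_{n-1-k})`; in particular it maps
covering relations to covering relations. -/
theorem stmt19 (n k : ℕ) (hn : 2 ≤ n) (hk : k ≤ n - 1) :
    ∃ e : AkSet (RootA n) k ≃o AkSet (RootA n) (n - 1 - k),
      (∀ A : AkSet (RootA n) k,
        RootA.fst '' ((e A).carrier : Set (RootA n)) =
          Set.Icc 1 (n - 1) \ ((fun p => p.snd - 1) '' (A.carrier : Set (RootA n))) ∧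
        RootA.snd '' ((e A).carrier : Set (RootA n)) =
          Set.Icc 2 n \ ((fun p => p.fst + 1) '' (A.carrier : Set (RootA n)))) ∧
      (∀ A' A : AkSet (RootA n) k, CovK A' A → CovK (e A') (e A)) :=
  stmt19_general n k hk
end
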